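/- arXiv:1803.01596 — 12 statements merged into one kernel-verified Lean document; each statement's English description precedes it below -/
import Mathlib

section
/- Let h, K, t be three non-collinear points of the Euclidean plane ℝ², and let ℓ be a line meeting the line hK at a point H, the line ht at a point D, and the line Kt at a point G, where H, D, G are each distinct from h, K and t. Then dist(D,h)·dist(H,K)·dist(G,t) = dist(D,t)·dist(H,h)·dist(G,K); that is, in Desargues' formulation of Menelaus' theorem, the ratio Dh/Dt is composed of the ratios Hh/HK and GK/Gt. -/
noncomputable section

open EuclideanGeometry

abbrev Pt : Type := EuclideanSpace ℝ (Fin 2)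

/-- The affine line through two points of the Euclidean plane. -/
def lineThrough (x y : Pt) : AffineSubspace ℝ Pt := affineSpan ℝ {x, y}

/-- A subset of the plane is a line if it is the affine span of two distinct points. -/
def IsLine (s : AffineSubspace ℝ Pt) : Prop := ∃ x y : Pt, x ≠ y ∧ s = lineThrough x y

private lemma indep_of_not_collinear {h K t : Pt}
    (hncol : ¬ Collinear ℝ ({h, K, t} : Set Pt)) :
    ∀ x y : ℝ, x • (K -ᵥ h) + y • (t -ᵥ h) = 0 → x = 0 ∧ y = 0 := by
  intro x y hxy
  by_contra hc
  rw [not_and_or] at hc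
  apply hncol
  have hmem : h ∈ ({h, K, t} : Set Pt) := by simp
  rcases hc with hx | hy
  · rw [collinear_iff_of_mem hmem]
    refine ⟨t -ᵥ h, ?_⟩
    intro p hp
    rcases hp with hp | hp | hp <;> subst hp
    · exact ⟨0, by simp⟩
    · refine ⟨-y/x, ?_⟩
      rw [eq_vadd_iff_vsub_eq]
      refine smul_right_injective _ hx ?_
      show x • (p -ᵥ h) = x • ((-y/x) • (t -ᵥ h))
      rw [smul_smul]
      have hxx : x * (-y/x) = -y := by field_simp
      rw [hxx]
      linear_combination (norm := module) hxy
    · exact ⟨1, by simp⟩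
  · rw [collinear_iff_of_mem hmem]
    refine ⟨K -ᵥ h, ?_⟩
    intro p hp
    rcases hp with hp | hp | hp <;> subst hp
    · exact ⟨0, by simp⟩
    · exact ⟨1, by simp⟩
    · refine ⟨-x/y, ?_⟩
      rw [eq_vadd_iff_vsub_eq]
      refine smul_right_injective _ hy ?_
      show y • (p -ᵥ h) = y • ((-x/y) • (K -ᵥ h))
      rw [smul_smul]
      have hyy : y * (-x/y) = -x := by field_simp
      rw [hyy]
      linear_combination (norm := module) hxy

/-- Menelaus' theorem in Desargues' formulation: Dh·HK·Gt = Dt·Hh·GK. -/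
theorem menelaus_desargues
    (h K t : Pt) (hncol : ¬ Collinear ℝ ({h, K, t} : Set Pt))
    (ℓ : AffineSubspace ℝ Pt) (hℓ : IsLine ℓ)
    (H D G : Pt)
    (hHℓ : H ∈ ℓ) (hH : H ∈ lineThrough h K)
    (hDℓ : D ∈ ℓ) (hD : D ∈ lineThrough h t)
    (hGℓ : G ∈ ℓ) (hG : G ∈ lineThrough K t)
    (hHh : H ≠ h) (hHK : H ≠ K) (hHt : H ≠ t)
    (hDh : D ≠ h) (hDK : D ≠ K) (hDt : D ≠ t)
    (hGh : G ≠ h) (hGK : G ≠ K) (hGt : G ≠ t) :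
    dist D h * dist H K * dist G t = dist D t * dist H h * dist G K := by
  have indep := indep_of_not_collinear hncol
  obtain ⟨a, ha⟩ : ∃ r : ℝ, r • (K -ᵥ h) = H -ᵥ h := by
    rw [← vadd_left_mem_affineSpan_pair (k := ℝ) (p₁ := h) (p₂ := K) (v := H -ᵥ h)]
    simpa [lineThrough] using hH
  obtain ⟨b, hb⟩ : ∃ r : ℝ, r • (t -ᵥ h) = D -ᵥ h := by
    rw [← vadd_left_mem_affineSpan_pair (k := ℝ) (p₁ := h) (p₂ := t) (v := D -ᵥ h)]
    simpa [lineThrough] using hD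
  obtain ⟨c, hc⟩ : ∃ r : ℝ, r • (t -ᵥ K) = G -ᵥ K := by
    rw [← vadd_left_mem_affineSpan_pair (k := ℝ) (p₁ := K) (p₂ := t) (v := G -ᵥ K)]
    simpa [lineThrough] using hG
  obtain ⟨x, y, hxy, rfl⟩ := hℓ
  have hcol : Collinear ℝ ({H, D, G} : Set Pt) :=
    collinear_triple_of_mem_affineSpan_pair (k := ℝ) hHℓ hDℓ hGℓ
  have hHmem : H ∈ ({H, D, G} : Set Pt) := by simp
  rw [collinear_iff_of_mem hHmem] at hcol
  obtain ⟨w, hw⟩ := hcol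
  obtain ⟨r, hr⟩ := hw D (by simp)
  obtain ⟨s, hs⟩ := hw G (by simp)
  have hDH : D -ᵥ H = (-a) • (K -ᵥ h) + b • (t -ᵥ h) := by
    rw [← vsub_sub_vsub_cancel_right D H h, ← ha, ← hb]; module
  have hGH : G -ᵥ H = (1 - c - a) • (K -ᵥ h) + c • (t -ᵥ h) := by
    have h2 : t -ᵥ K = (t -ᵥ h) - (K -ᵥ h) := (vsub_sub_vsub_cancel_right t K h).symm
    rw [← vsub_sub_vsub_cancel_right G H K, ← vsub_sub_vsub_cancel_right H K h, ← hc, ← ha, h2]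
    module
  have hrw : D -ᵥ H = r • w := by rw [hr]; simp
  have hsw : G -ᵥ H = s • w := by rw [hs]; simp
  have key : b * (1 - a) * (1 - c) = -(a * c * (1 - b)) := by
    have hcross : s • (D -ᵥ H) = r • (G -ᵥ H) := by
      rw [hrw, hsw, smul_smul, smul_smul, mul_comm]
    rw [hDH, hGH] at hcross
    have hcross' : (s * (-a) - r * (1 - c - a)) • (K -ᵥ h) + (s * b - r * c) • (t -ᵥ h) = 0 := by
      linear_combination (norm := module) hcross
    obtain ⟨e1, e2⟩ := indep _ _ hcross'
    have e1' : s * a = -(r * (1 - c - a)) := by linarith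
    have e2' : s * b = r * c := by linarith
    have hDne : D ≠ H := by
      intro hDH'
      have h00 : (-a) • (K -ᵥ h) + b • (t -ᵥ h) = 0 := by
        have h01 : D -ᵥ H = 0 := by rw [hDH']; simp
        rw [hDH] at h01
        exact h01
      obtain ⟨ea, eb⟩ := indep _ _ h00
      apply hHh
      have ha0 : a = 0 := by linarith [neg_eq_zero.mp ea]
      have h1 : H -ᵥ h = (0:ℝ) • (K -ᵥ h) := by rw [← ha, ha0]
      rw [zero_smul] at h1
      exact vsub_eq_zero_iff_eq.mp h1
    have hGne : G ≠ H := by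
      intro hGH'
      have h0 : (1 - c - a) • (K -ᵥ h) + c • (t -ᵥ h) = 0 := by
        have h00 : G -ᵥ H = 0 := by rw [hGH']; simp
        rw [hGH] at h00
        exact h00
      obtain ⟨ea, eb⟩ := indep _ _ h0
      apply hHK
      have ha1 : a = 1 := by rw [eb] at ea; linarith
      have h1 : H -ᵥ K = 0 := by
        rw [← vsub_sub_vsub_cancel_right H K h, ← ha, ha1]
        module
      exact vsub_eq_zero_iff_eq.mp h1
    have hrne : r ≠ 0 := by
      intro hr0
      apply hDne
      apply vsub_eq_zero_iff_eq.mp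
      rw [hrw, hr0, zero_smul]
    have hsne : s ≠ 0 := by
      intro hs0
      apply hGne
      apply vsub_eq_zero_iff_eq.mp
      rw [hsw, hs0, zero_smul]
    have hmul : r * s * (b * (1 - a) * (1 - c) + a * c * (1 - b)) = 0 := by
      linear_combination (r * c) * e1' + (r * (1 - a - c)) * e2'
    have h0 : b * (1 - a) * (1 - c) + a * c * (1 - b) = 0 := by
      rcases mul_eq_zero.mp hmul with h' | h'
      · exact absurd h' (mul_ne_zero hrne hsne)
      · exact h'
    linarith
  have dDh : dist D h = |b| * dist t h := by
    rw [dist_eq_norm_vsub Pt, dist_eq_norm_vsub Pt, ← hb, norm_smul]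
    simp [Real.norm_eq_abs]
  have dDt : dist D t = |1 - b| * dist t h := by
    rw [dist_eq_norm_vsub Pt, dist_eq_norm_vsub Pt]
    have h1 : D -ᵥ t = (1 - b) • (h -ᵥ t) := by
      rw [← vsub_sub_vsub_cancel_right D t h, ← hb, ← neg_vsub_eq_vsub_rev h t]
      module
    rw [h1, norm_smul, ← neg_vsub_eq_vsub_rev t h, norm_neg]
    simp [Real.norm_eq_abs]
  have dHh : dist H h = |a| * dist K h := by
    rw [dist_eq_norm_vsub Pt, dist_eq_norm_vsub Pt, ← ha, norm_smul]
    simp [Real.norm_eq_abs]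
  have dHK : dist H K = |1 - a| * dist K h := by
    rw [dist_eq_norm_vsub Pt, dist_eq_norm_vsub Pt]
    have h1 : H -ᵥ K = (1 - a) • (h -ᵥ K) := by
      rw [← vsub_sub_vsub_cancel_right H K h, ← ha, ← neg_vsub_eq_vsub_rev h K]
      module
    rw [h1, norm_smul, ← neg_vsub_eq_vsub_rev K h, norm_neg]
    simp [Real.norm_eq_abs]
  have dGK : dist G K = |c| * dist t K := by
    rw [dist_eq_norm_vsub Pt, dist_eq_norm_vsub Pt, ← hc, norm_smul]
    simp [Real.norm_eq_abs]
  have dGt : dist G t = |1 - c| * dist t K := by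
    rw [dist_eq_norm_vsub Pt, dist_eq_norm_vsub Pt]
    have h1 : G -ᵥ t = (1 - c) • (K -ᵥ t) := by
      rw [← vsub_sub_vsub_cancel_right G t K, ← hc, ← neg_vsub_eq_vsub_rev K t]
      module
    rw [h1, norm_smul, ← neg_vsub_eq_vsub_rev t K, norm_neg]
    simp [Real.norm_eq_abs]
  rw [dDh, dDt, dHh, dHK, dGK, dGt]
  have habs : |b| * |1 - a| * |1 - c| = |1 - b| * |a| * |c| := by
    rw [← abs_mul, ← abs_mul, ← abs_mul, ← abs_mul, key, abs_neg]
    ring_nf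
  calc |b| * dist t h * (|1 - a| * dist K h) * (|1 - c| * dist t K)
      = (|b| * |1 - a| * |1 - c|) * (dist t h * dist K h * dist t K) := by ring
    _ = (|1 - b| * |a| * |c|) * (dist t h * dist K h * dist t K) := by rw [habs]
    _ = |1 - b| * dist t h * (|a| * dist K h) * (|c| * dist t K) := by ring
end
end

section
/- Let h, K, t be three non-collinear points of ℝ². Let H be a point of line hK with H ∉ {h,K}, D a point of line ht with D ∉ {h,t}, and G a point of line Kt with G ∉ {K,t}. If the signed ratios satisfy Dh/Dt = (Hh/HK)·(GK/Gt), then the three points H, D, G are collinear (converse of Menelaus' theorem). -/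
noncomputable section

open EuclideanGeometry

/-! Clearing denominators in the three ratio conditions and adding them up gives the
linear relation `(1 - r₂) • H + r₂ (1 - r₃) • G = (1 - r₂ r₃) • D`, whose coefficients on the
left sum to the one on the right. When `h ≠ t` that coefficient is nonzero, so `D` is an affine
combination of `H` and `G`. -/

section

variable {k V : Type*} [Field k] [AddCommGroup V] [Module k V]

theorem collinear_of_smul_add_smul_eq_add_smul {a b : k} {x y z : V} (hab : a + b ≠ 0)
    (h : a • x + b • y = (a + b) • z) : Collinear k ({x, z, y} : Set V) := by
  have hz : z = AffineMap.lineMap x y (b / (a + b)) := by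
    rw [AffineMap.lineMap_apply_module, ← inv_smul_smul₀ hab z, ← h]
    match_scalars <;> field_simp; ring
  rw [Set.insert_comm, hz]
  exact collinear_insert_of_mem_affineSpan_pair (AffineMap.lineMap_mem_affineSpan_pair _ _ _)

theorem menelaus_smul_add_smul_eq {h K t H D G : V} {r₂ r₃ : k}
    (hr₁ : h - D = (r₂ * r₃) • (t - D)) (hr₂ : h - H = r₂ • (K - H))
    (hr₃ : K - G = r₃ • (t - G)) :
    (1 - r₂) • H + (r₂ * (1 - r₃)) • G = ((1 - r₂) + r₂ * (1 - r₃)) • D := by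
  linear_combination (norm := module) hr₁ - hr₂ - r₂ • hr₃

theorem menelaus_coeff_ne_zero {h t D : V} {r₂ r₃ : k} (hht : h ≠ t)
    (hr₁ : h - D = (r₂ * r₃) • (t - D)) : (1 - r₂) + r₂ * (1 - r₃) ≠ 0 := by
  intro hzero
  have hone : r₂ * r₃ = 1 := by linear_combination -hzero
  rw [hone, one_smul] at hr₁
  exact hht (sub_left_injective hr₁)

end

theorem menelaus_converse_general
    (h K t : Pt) (hncol : ¬ Collinear ℝ ({h, K, t} : Set Pt))
    (H D G : Pt)
    (r₁ r₂ r₃ : ℝ)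
    (hr₁ : h - D = r₁ • (t - D))
    (hr₂ : h - H = r₂ • (K - H))
    (hr₃ : K - G = r₃ • (t - G))
    (hratio : r₁ = r₂ * r₃) :
    Collinear ℝ ({H, D, G} : Set Pt) := by
  subst hratio
  exact collinear_of_smul_add_smul_eq_add_smul
    (menelaus_coeff_ne_zero (ne₁₃_of_not_collinear hncol) hr₁)
    (menelaus_smul_add_smul_eq hr₁ hr₂ hr₃)

/-- Converse of Menelaus' theorem, with signed ratios. -/
theorem menelaus_converse
    (h K t : Pt) (hncol : ¬ Collinear ℝ ({h, K, t} : Set Pt))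
    (H D G : Pt)
    (hH : H ∈ lineThrough h K) (hHh : H ≠ h) (hHK : H ≠ K)
    (hD : D ∈ lineThrough h t) (hDh : D ≠ h) (hDt : D ≠ t)
    (hG : G ∈ lineThrough K t) (hGK : G ≠ K) (hGt : G ≠ t)
    (r₁ r₂ r₃ : ℝ)
    (hr₁ : h - D = r₁ • (t - D))
    (hr₂ : h - H = r₂ • (K - H))
    (hr₃ : K - G = r₃ • (t - G))
    (hratio : r₁ = r₂ * r₃) :
    Collinear ℝ ({H, D, G} : Set Pt) :=
  menelaus_converse_general h K t hncol H D G r₁ r₂ r₃ hr₁ hr₂ hr₃ hratio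
end
end

section
/- (Theorem of the ramée.) Let Δ be a line of ℝ² carrying six pairwise distinct points B, H, C, G, D, F satisfying Desargues' involution identity based on the couple (D,F), namely DG·DC·FB·FH = FG·FC·DB·DH. Let K be a point not on Δ, and let δ be a line not passing through K such that each of the six lines KB, KH, KC, KG, KD, KF meets δ, in points b, h, c, g, d, f respectively, these six points being pairwise distinct. Then dg·dc·fb·fh = fg·fc·db·dh; that is, the projected points satisfy the same involution identity based on the couple (d,f). -/
noncomputable section

open EuclideanGeometry

/-!
Twice the area of a triangle `K p q` is `|cross (p - K) (q - K)|`. When `p, q` run over the line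
`δ`, this is `dist p q` times the distance from `K` to `δ`; when `p - K = μ • (P - K)` and
`q - K = ν • (Q - K)`, it is `|μ| |ν|` times twice the area of `K P Q`. Hence central projection
from `K` of `Δ` onto `δ` multiplies distances as `dist p q = κ |μ| |ν| dist P Q` with `κ` depending
only on `K`, `Δ` and `δ`. Each of the six points occurs equally often on both sides of the
involution identity, so the factors `κ`, `|μ|`, `|ν|` cancel.
-/

def cross (u v : Pt) : ℝ := u 0 * v 1 - u 1 * v 0

lemma cross_smul_smul (μ ν : ℝ) (u v : Pt) : cross (μ • u) (ν • v) = μ * ν * cross u v := by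
  simp only [cross, PiLp.smul_apply, smul_eq_mul]
  ring

lemma cross_add_smul_add_smul (a u : Pt) (s t : ℝ) :
    cross (a + s • u) (a + t • u) = (t - s) * cross a u := by
  simp only [cross, PiLp.add_apply, PiLp.smul_apply, smul_eq_mul]
  ring

lemma mem_lineThrough_iff {p x y : Pt} : p ∈ lineThrough x y ↔ ∃ r : ℝ, r • (y - x) + x = p := by
  simp [lineThrough, mem_affineSpan_pair_iff_exists_lineMap_eq, AffineMap.lineMap_apply]

lemma exists_sub_eq_smul_sub_of_mem_lineThrough {p K P : Pt} (hp : p ∈ lineThrough K P) :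
    ∃ μ : ℝ, p - K = μ • (P - K) := by
  obtain ⟨μ, rfl⟩ := mem_lineThrough_iff.mp hp
  exact ⟨μ, add_sub_cancel_right _ _⟩

lemma exists_eq_smul_of_cross_eq_zero {a u : Pt} (hu : u ≠ 0) (h : cross a u = 0) :
    ∃ r : ℝ, a = r • u := by
  have hu' : u 0 ≠ 0 ∨ u 1 ≠ 0 := by
    by_contra! hu0
    exact hu (by ext i; fin_cases i <;> simp [hu0.1, hu0.2])
  rw [cross] at h
  rcases hu' with h0 | h1
  · refine ⟨a 0 / u 0, ?_⟩
    ext i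
    fin_cases i
    · simp [h0]
    · simp; field_simp; linarith
  · refine ⟨a 1 / u 1, ?_⟩
    ext i
    fin_cases i
    · simp; field_simp; linarith
    · simp [h1]

lemma cross_ne_zero_of_notMem_lineThrough {K x y : Pt} (hxy : x ≠ y)
    (hK : K ∉ lineThrough x y) : cross (x - K) (y - x) ≠ 0 := by
  intro h
  obtain ⟨r, hr⟩ := exists_eq_smul_of_cross_eq_zero (sub_ne_zero.mpr hxy.symm) h
  exact hK (mem_lineThrough_iff.mpr ⟨-r, by rw [neg_smul, ← hr]; abel⟩)

/-- Both sides are `‖y - x‖` times twice the area of the triangle `K p q`. -/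
lemma norm_mul_abs_cross_eq_abs_cross_mul_dist {K x y p q : Pt} (hp : p ∈ lineThrough x y)
    (hq : q ∈ lineThrough x y) :
    ‖y - x‖ * |cross (p - K) (q - K)| = |cross (x - K) (y - x)| * dist p q := by
  obtain ⟨s, rfl⟩ := mem_lineThrough_iff.mp hp
  obtain ⟨t, rfl⟩ := mem_lineThrough_iff.mp hq
  have hpK : s • (y - x) + x - K = (x - K) + s • (y - x) := by abel
  have hqK : t • (y - x) + x - K = (x - K) + t • (y - x) := by abel
  have hpq : s • (y - x) + x - (t • (y - x) + x) = (s - t) • (y - x) := by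
    rw [sub_smul]; abel
  rw [hpK, hqK, cross_add_smul_add_smul, dist_eq_norm, hpq, norm_smul, Real.norm_eq_abs,
    abs_mul, abs_sub_comm t s]
  ring

lemma exists_dist_eq_of_central_projection {K x y x' y' : Pt} (hxy : x ≠ y) (hx'y' : x' ≠ y')
    (hK : K ∉ lineThrough x' y') :
    ∃ κ : ℝ, ∀ {P Q p q : Pt} {μ ν : ℝ}, P ∈ lineThrough x y → Q ∈ lineThrough x y →
      p ∈ lineThrough x' y' → q ∈ lineThrough x' y' →
      p - K = μ • (P - K) → q - K = ν • (Q - K) → dist p q = κ * |μ| * |ν| * dist P Q := by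
  have hu : ‖y - x‖ ≠ 0 := norm_ne_zero_iff.mpr (sub_ne_zero.mpr hxy.symm)
  have hc : |cross (x' - K) (y' - x')| ≠ 0 :=
    abs_ne_zero.mpr (cross_ne_zero_of_notMem_lineThrough hx'y' hK)
  refine ⟨‖y' - x'‖ * |cross (x - K) (y - x)| / (|cross (x' - K) (y' - x')| * ‖y - x‖), ?_⟩
  intro P Q p q μ ν hP hQ hp hq hpP hqQ
  have hbig := norm_mul_abs_cross_eq_abs_cross_mul_dist (K := K) hP hQ
  have hsmall := norm_mul_abs_cross_eq_abs_cross_mul_dist (K := K) hp hq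
  rw [hpP, hqQ, cross_smul_smul, abs_mul, abs_mul] at hsmall
  field_simp
  linear_combination (-1 : ℝ) * ‖y - x‖ * hsmall + ‖y' - x'‖ * |μ| * |ν| * hbig

theorem ramee_general
    (B H C G D F : Pt)
    (hdist : List.Pairwise (· ≠ ·) [B, H, C, G, D, F])
    (hcol : Collinear ℝ ({B, H, C, G, D, F} : Set Pt))
    (hinv : dist D G * dist D C * dist F B * dist F H
          = dist F G * dist F C * dist D B * dist D H)
    (K : Pt)
    (δ : AffineSubspace ℝ Pt) (hδ : IsLine δ) (hKδ : K ∉ δ)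
    (b h c g d f : Pt)
    (hb : b ∈ lineThrough K B) (hbδ : b ∈ δ)
    (hh : h ∈ lineThrough K H) (hhδ : h ∈ δ)
    (hc : c ∈ lineThrough K C) (hcδ : c ∈ δ)
    (hg : g ∈ lineThrough K G) (hgδ : g ∈ δ)
    (hd : d ∈ lineThrough K D) (hdδ : d ∈ δ)
    (hf : f ∈ lineThrough K F) (hfδ : f ∈ δ) :
    dist d g * dist d c * dist f b * dist f h
      = dist f g * dist f c * dist d b * dist d h := by
  have hBH : B ≠ H := List.rel_of_pairwise_cons hdist (by simp)
  have onΔ {P : Pt} (hP : P ∈ ({B, H, C, G, D, F} : Set Pt)) : P ∈ lineThrough B H :=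
    hcol.mem_affineSpan_of_mem_of_ne (by simp) (by simp) hP hBH
  obtain ⟨x, y, hxy, rfl⟩ := hδ
  obtain ⟨κ, hκ⟩ := exists_dist_eq_of_central_projection hBH hxy hKδ
  obtain ⟨μb, hμb⟩ := exists_sub_eq_smul_sub_of_mem_lineThrough hb
  obtain ⟨μh, hμh⟩ := exists_sub_eq_smul_sub_of_mem_lineThrough hh
  obtain ⟨μc, hμc⟩ := exists_sub_eq_smul_sub_of_mem_lineThrough hc
  obtain ⟨μg, hμg⟩ := exists_sub_eq_smul_sub_of_mem_lineThrough hg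
  obtain ⟨μd, hμd⟩ := exists_sub_eq_smul_sub_of_mem_lineThrough hd
  obtain ⟨μf, hμf⟩ := exists_sub_eq_smul_sub_of_mem_lineThrough hf
  rw [hκ (onΔ (by simp)) (onΔ (by simp)) hdδ hgδ hμd hμg,
    hκ (onΔ (by simp)) (onΔ (by simp)) hdδ hcδ hμd hμc,
    hκ (onΔ (by simp)) (onΔ (by simp)) hfδ hbδ hμf hμb,
    hκ (onΔ (by simp)) (onΔ (by simp)) hfδ hhδ hμf hμh,
    hκ (onΔ (by simp)) (onΔ (by simp)) hfδ hgδ hμf hμg,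
    hκ (onΔ (by simp)) (onΔ (by simp)) hfδ hcδ hμf hμc,
    hκ (onΔ (by simp)) (onΔ (by simp)) hdδ hbδ hμd hμb,
    hκ (onΔ (by simp)) (onΔ (by simp)) hdδ hhδ hμd hμh]
  linear_combination
    (κ ^ 4 * |μd| ^ 2 * |μf| ^ 2 * |μb| * |μh| * |μc| * |μg|) * hinv

/-- The theorem of the ramée: central projection preserves Desargues' involution identity. -/
theorem ramee
    (B H C G D F : Pt)
    (hdist : List.Pairwise (· ≠ ·) [B, H, C, G, D, F])
    (hcol : Collinear ℝ ({B, H, C, G, D, F} : Set Pt))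
    (hinv : dist D G * dist D C * dist F B * dist F H
          = dist F G * dist F C * dist D B * dist D H)
    (K : Pt) (hK : K ∉ lineThrough B H)
    (δ : AffineSubspace ℝ Pt) (hδ : IsLine δ) (hKδ : K ∉ δ)
    (b h c g d f : Pt)
    (hb : b ∈ lineThrough K B) (hbδ : b ∈ δ)
    (hh : h ∈ lineThrough K H) (hhδ : h ∈ δ)
    (hc : c ∈ lineThrough K C) (hcδ : c ∈ δ)
    (hg : g ∈ lineThrough K G) (hgδ : g ∈ δ)
    (hd : d ∈ lineThrough K D) (hdδ : d ∈ δ)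
    (hf : f ∈ lineThrough K F) (hfδ : f ∈ δ)
    (hdist' : List.Pairwise (· ≠ ·) [b, h, c, g, d, f]) :
    dist d g * dist d c * dist f b * dist f h
      = dist f g * dist f c * dist d b * dist d h :=
  ramee_general B H C G D F hdist hcol hinv K δ hδ hKδ b h c g d f hb hbδ hh hhδ hc hcδ hg hgδ hd
    hdδ hf hfδ
end
end

section
/- Let B, C, D, F be four pairwise distinct collinear points of ℝ² forming a harmonic range with pairs {B,C} and {D,F}, and let K be a point not on their common line. Let ℓ be a line parallel to line KD, not passing through K, which meets the lines KB, KC, KF in points b, c, f respectively. Then f is the midpoint of b and c. -/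
noncomputable section

open EuclideanGeometry

/-- Projection of a harmonic range onto a line parallel to KD sends f to the midpoint of bc. -/
theorem harmonic_projection_midpoint
    (B C D F : Pt)
    (hdist : List.Pairwise (· ≠ ·) [B, C, D, F])
    (hcol : Collinear ℝ ({B, C, D, F} : Set Pt))
    (r s : ℝ)
    (hr : B - D = r • (C - D)) (hs : B - F = s • (C - F)) (hrs : r = -s)
    (K : Pt) (hK : K ∉ lineThrough B C)
    (ℓ : AffineSubspace ℝ Pt) (hℓ : IsLine ℓ)
    (hpar : AffineSubspace.Parallel ℓ (lineThrough K D))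
    (hKℓ : K ∉ ℓ)
    (b c f : Pt)
    (hb : b ∈ lineThrough K B) (hbℓ : b ∈ ℓ)
    (hc : c ∈ lineThrough K C) (hcℓ : c ∈ ℓ)
    (hf : f ∈ lineThrough K F) (hfℓ : f ∈ ℓ) :
    f = midpoint ℝ b c := by
  -- distinctness facts
  have hBC : B ≠ C := by simp at hdist; tauto
  have hBD : B ≠ D := by simp at hdist; tauto
  -- scalar nondegeneracy
  have hr1 : r ≠ 1 := by
    intro h
    rw [h, one_smul] at hr
    exact hBC (by linear_combination (norm := module) hr)
  have hr0 : r ≠ 0 := by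
    intro h
    rw [h, zero_smul, sub_eq_zero] at hr
    exact hBD hr
  have hrm1 : 1 + r ≠ 0 := by
    intro h
    have hsv : s = 1 := by linarith [hrs, h]
    rw [hsv, one_smul] at hs
    exact hBC (by linear_combination (norm := module) hs)
  -- membership characterization for lineThrough
  have hmem : ∀ p q x : Pt, x ∈ lineThrough p q → ∃ t : ℝ, x - p = t • (q - p) := by
    intro p q x hx
    have h1 : x -ᵥ p ∈ (lineThrough p q).direction :=
      AffineSubspace.vsub_mem_direction hx (by
        simpa [lineThrough] using left_mem_affineSpan_pair ℝ p q)
    rw [lineThrough, direction_affineSpan, vectorSpan_pair_rev,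
      Submodule.mem_span_singleton] at h1
    obtain ⟨t, ht⟩ := h1
    exact ⟨t, ht.symm⟩
  -- B - K is never a scalar multiple of C - K (else K ∈ line BC)
  have hnc : ∀ μ : ℝ, B - K ≠ μ • (C - K) := by
    intro μ h
    by_cases hμ : μ = 1
    · rw [hμ, one_smul] at h
      exact hBC (by linear_combination (norm := module) h)
    · apply hK
      have hμ1 : μ - 1 ≠ 0 := sub_ne_zero.mpr hμ
      have h1 : B = μ • C + (1 - μ) • K := by linear_combination (norm := module) h
      have h2 : K = AffineMap.lineMap B C (μ / (μ - 1)) := by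
        rw [AffineMap.lineMap_apply, h1]
        show K = (μ / (μ - 1)) • (C - (μ • C + (1 - μ) • K)) + (μ • C + (1 - μ) • K)
        match_scalars <;> field_simp <;> ring
      rw [h2]
      exact AffineMap.lineMap_mem_affineSpan_pair _ B C
  have hCK : C - K ≠ 0 := by
    intro h
    apply hK
    have hck : C = K := by rwa [sub_eq_zero] at h
    rw [← hck, lineThrough]
    exact right_mem_affineSpan_pair ℝ B C
  -- rewrite the hypotheses in vector form
  have hB : B - K = r • (C - K) + (1 - r) • (D - K) := by
    linear_combination (norm := module) hr
  have hF : (1 + r) • (F - K) = (B - K) + r • (C - K) := by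
    have hsr : s = -r := by linarith
    rw [hsr] at hs
    linear_combination (norm := module) -hs
  -- extraction lemma: C - K not parallel to D - K
  have hind : ∀ a t : ℝ, a • (C - K) = t • (D - K) → a = 0 := by
    intro a t h
    by_contra ha
    have hγ : C - K = (a⁻¹ * t) • (D - K) := by
      rw [mul_smul, ← h, smul_smul, inv_mul_cancel₀ ha, one_smul]
    set q := a⁻¹ * t with hqdef
    by_cases hq : q = 0
    · rw [hq, zero_smul] at hγ
      exact hCK hγ
    · have hδ : D - K = q⁻¹ • (C - K) := by
        rw [hγ, smul_smul, inv_mul_cancel₀ hq, one_smul]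
      apply hnc (r + (1 - r) * q⁻¹)
      rw [hB, hδ]
      module
  -- the direction of ℓ
  have hdir : ℓ.direction = Submodule.span ℝ {D - K} := by
    rw [hpar.direction_eq, lineThrough, direction_affineSpan]
    exact vectorSpan_pair_rev ℝ K D
  -- points on ℓ differ by multiples of D - K
  obtain ⟨t1, ht1⟩ : ∃ t : ℝ, b - c = t • (D - K) := by
    have h1 : b -ᵥ c ∈ ℓ.direction := AffineSubspace.vsub_mem_direction hbℓ hcℓ
    rw [hdir, Submodule.mem_span_singleton] at h1
    obtain ⟨t, ht⟩ := h1
    exact ⟨t, ht.symm⟩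
  obtain ⟨t2, ht2⟩ : ∃ t : ℝ, f - c = t • (D - K) := by
    have h1 : f -ᵥ c ∈ ℓ.direction := AffineSubspace.vsub_mem_direction hfℓ hcℓ
    rw [hdir, Submodule.mem_span_singleton] at h1
    obtain ⟨t, ht⟩ := h1
    exact ⟨t, ht.symm⟩
  -- parametrize b, c, f on the cevians
  obtain ⟨lb, hlb⟩ := hmem K B b hb
  obtain ⟨mc, hmc⟩ := hmem K C c hc
  obtain ⟨nf, hnf⟩ := hmem K F f hf
  -- extract the scalar relations
  have e1 : (lb * r - mc) • (C - K) = (t1 - lb * (1 - r)) • (D - K) := by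
    have hbc : lb • (B - K) - mc • (C - K) = t1 • (D - K) := by
      rw [← hlb, ← hmc]
      linear_combination (norm := module) ht1
    linear_combination (norm := module) hbc - lb • hB
  have e2 : (2 * nf * r - (1 + r) * mc) • (C - K)
      = ((1 + r) * t2 - nf * (1 - r)) • (D - K) := by
    have hfc : nf • (F - K) - mc • (C - K) = t2 • (D - K) := by
      rw [← hnf, ← hmc]
      linear_combination (norm := module) ht2
    linear_combination (norm := module) (1 + r) • hfc - nf • hF - nf • hB
  have ha1 : lb * r - mc = 0 := hind _ _ e1
  have ha2 : 2 * nf * r - (1 + r) * mc = 0 := hind _ _ e2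
  have hmcv : mc = lb * r := by linarith
  have hnfv : nf = (1 + r) * lb / 2 := by
    have h2 : (2 * nf - (1 + r) * lb) * r = 0 := by rw [hmcv] at ha2; ring_nf; ring_nf at ha2; linarith
    have := mul_eq_zero.mp h2
    rcases this with h | h
    · linarith
    · exact absurd h hr0
  -- finish
  have hmid : midpoint ℝ b c = (2⁻¹ : ℝ) • (b + c) := by
    rw [midpoint_eq_smul_add]; norm_num
  rw [hmid]
  have hbv : b = lb • (B - K) + K := by linear_combination (norm := module) hlb
  have hcv : c = mc • (C - K) + K := by linear_combination (norm := module) hmc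
  have hfv : f = nf • (F - K) + K := by linear_combination (norm := module) hnf
  rw [hbv, hcv, hfv, hmcv, hnfv]
  linear_combination (norm := module) (lb / 2) • hF
end
end

section
/- Let B, C, D, F be four pairwise distinct collinear points of ℝ² forming a harmonic range with pairs {B,C} and {D,F}, and let K be a point not on their common line. Let ℓ be a line not passing through K which meets the lines KB, KC, KF in points b, c, f respectively, with b ≠ c. If f is the midpoint of b and c, then ℓ is parallel to the line KD. -/
noncomputable section

open EuclideanGeometry

lemma indep_aux (B C K : Pt) (hBC : B ≠ C) (hK : K ∉ lineThrough B C)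
    {a b : ℝ} (h : a • (B - K) + b • (C - K) = 0) : a = 0 ∧ b = 0 := by
  by_cases hab : a + b = 0
  · have hb : b = -a := by linarith
    subst hb
    have h0 : a • (B - C) = 0 := by linear_combination (norm := module) h
    rcases smul_eq_zero.1 h0 with h1 | h1
    · exact ⟨h1, by simp [h1]⟩
    · exact absurd (sub_eq_zero.1 h1) hBC
  · exfalso
    apply hK
    have h2 : (a + b) • (K - B) = b • (C - B) := by
      linear_combination (norm := module) -h
    have h3 : (b / (a + b)) • (C - B) = K - B := by
      rw [div_eq_inv_mul, mul_smul, ← h2, inv_smul_smul₀ hab]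
    have h4 := (vadd_left_mem_affineSpan_pair (k := ℝ) (p₁ := B) (p₂ := C)).2
      ⟨b / (a + b), by simpa [vsub_eq_sub] using h3⟩
    simpa [lineThrough, vadd_eq_add, sub_add_cancel] using h4

lemma mem_line_iff {P Q x : Pt} (h : x ∈ lineThrough P Q) : ∃ t : ℝ, t • (Q - P) = x - P := by
  rw [lineThrough] at h
  have h2 := AffineSubspace.vsub_mem_direction h (left_mem_affineSpan_pair ℝ P Q)
  rw [direction_affineSpan, mem_vectorSpan_pair_rev] at h2
  simpa [vsub_eq_sub] using h2

/-- Converse: if f is the midpoint of bc then the line ℓ is parallel to KD. -/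
theorem harmonic_projection_midpoint_converse
    (B C D F : Pt)
    (hdist : List.Pairwise (· ≠ ·) [B, C, D, F])
    (hcol : Collinear ℝ ({B, C, D, F} : Set Pt))
    (r s : ℝ)
    (hr : B - D = r • (C - D)) (hs : B - F = s • (C - F)) (hrs : r = -s)
    (K : Pt) (hK : K ∉ lineThrough B C)
    (ℓ : AffineSubspace ℝ Pt) (hℓ : IsLine ℓ) (hKℓ : K ∉ ℓ)
    (b c f : Pt)
    (hb : b ∈ lineThrough K B) (hbℓ : b ∈ ℓ)
    (hc : c ∈ lineThrough K C) (hcℓ : c ∈ ℓ)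
    (hf : f ∈ lineThrough K F) (hfℓ : f ∈ ℓ)
    (hbc : b ≠ c)
    (hmid : f = midpoint ℝ b c) :
    AffineSubspace.Parallel ℓ (lineThrough K D) := by
  have hBC : B ≠ C := (List.pairwise_cons.mp hdist).1 C (by simp)
  have hBD : B ≠ D := (List.pairwise_cons.mp hdist).1 D (by simp)
  obtain ⟨x, y, hxy, hℓeq⟩ := hℓ
  have hsr : s = -r := by rw [hrs]; ring
  rw [hsr] at hs
  have hr1 : r ≠ 1 := by
    intro h; apply hBC; rw [h, one_smul] at hr; exact sub_left_inj.mp hr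
  have hrm1 : r ≠ -1 := by
    intro h; apply hBC
    rw [h] at hs; norm_num at hs; exact hs
  have hr0 : r ≠ 0 := by
    intro h; apply hBD; rw [h, zero_smul, sub_eq_zero] at hr; exact hr
  have hD : (1 - r) • (D - K) = (B - K) - r • (C - K) := by
    linear_combination (norm := module) -hr
  have hF : (1 + r) • (F - K) = (B - K) + r • (C - K) := by
    linear_combination (norm := module) -hs
  obtain ⟨β, hβ⟩ := mem_line_iff hb
  obtain ⟨γ, hγ⟩ := mem_line_iff hc
  obtain ⟨φ, hφ⟩ := mem_line_iff hf
  have hm2 : f + f = b + c := by rw [hmid]; exact midpoint_add_self ℝ b c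
  have hmid' : (2*φ) • (F - K) = β • (B - K) + γ • (C - K) := by
    linear_combination (norm := module) (2:ℝ) • hφ + hm2 - hβ - hγ
  have key : (2*φ - (1+r)*β) • (B - K) + (2*φ*r - (1+r)*γ) • (C - K) = 0 := by
    linear_combination (norm := module) (1+r) • hmid' - (2*φ) • hF
  obtain ⟨e1, e2⟩ := indep_aux B C K hBC hK key
  have h1r : (1:ℝ) + r ≠ 0 := by intro h; apply hrm1; linarith
  have hγβ : γ = r * β := by
    have h5 : (1+r)*γ = (1+r)*(r*β) := by linear_combination r * e1 - e2
    exact mul_left_cancel₀ h1r h5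
  have hβ0 : β ≠ 0 := by
    intro h; apply hKℓ
    rw [h, zero_smul] at hβ
    have : b = K := sub_eq_zero.mp hβ.symm
    rwa [← this]
  rw [hγβ] at hγ
  have hcb : c - b = (-β * (1 - r)) • (D - K) := by
    linear_combination (norm := module) β • hD + hβ - hγ
  have hμ0 : -β * (1 - r) ≠ 0 := by
    apply mul_ne_zero (neg_ne_zero.mpr hβ0)
    intro h; apply hr1; linarith
  have hcb0 : c - b ≠ 0 := sub_ne_zero_of_ne (Ne.symm hbc)
  have hcbmem : c - b ∈ ℓ.direction := by
    have := AffineSubspace.vsub_mem_direction hcℓ hbℓ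
    simpa [vsub_eq_sub] using this
  have hdirℓ : ℓ.direction = ℝ ∙ (c - b) := by
    rw [hℓeq, lineThrough, direction_affineSpan, vectorSpan_pair_rev,
      Submodule.mem_span_singleton] at hcbmem
    obtain ⟨t, ht⟩ := hcbmem
    have ht0 : t ≠ 0 := by rintro rfl; rw [zero_smul] at ht; exact hcb0 ht.symm
    rw [hℓeq, lineThrough, direction_affineSpan, vectorSpan_pair_rev, ← ht]
    exact (Submodule.span_singleton_smul_eq (IsUnit.mk0 t ht0) _).symm
  have hdirKD : (lineThrough K D).direction = ℝ ∙ (D - K) := by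
    rw [lineThrough, direction_affineSpan, vectorSpan_pair_rev]
    norm_num [vsub_eq_sub]
  have hspan : (ℝ ∙ (c - b) : Submodule ℝ Pt) = ℝ ∙ (D - K) := by
    rw [hcb]
    exact Submodule.span_singleton_smul_eq (IsUnit.mk0 _ hμ0) _
  rw [AffineSubspace.parallel_iff_direction_eq_and_eq_bot_iff_eq_bot]
  refine ⟨by rw [hdirℓ, hdirKD, hspan], ?_⟩
  have h1 : ℓ ≠ ⊥ := by
    rw [← AffineSubspace.nonempty_iff_ne_bot]; exact ⟨b, hbℓ⟩
  have h2 : lineThrough K D ≠ ⊥ := by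
    rw [← AffineSubspace.nonempty_iff_ne_bot]
    exact ⟨K, left_mem_affineSpan_pair ℝ K D⟩
  simp [h1, h2]
end
end

section
/- Let B, C, D, F be four pairwise distinct collinear points of ℝ² forming a harmonic range with pairs {B,C} and {D,F}, and suppose C lies strictly between D and F. Let K be a point not on their common line such that the line KC bisects the angle DKF, i.e. the undirected angles satisfy ∠DKC = ∠CKF. Then the lines KB and KC are perpendicular: ∠BKC = π/2. -/
noncomputable section

open EuclideanGeometry

open RealInnerProductSpace in
/-- If KC bisects the angle DKF for a harmonic range (B,C;D,F) with C strictly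
between D and F, then KB ⟂ KC. -/
theorem harmonic_bisector_implies_perp
    (B C D F : Pt)
    (hdist : List.Pairwise (· ≠ ·) [B, C, D, F])
    (hcol : Collinear ℝ ({B, C, D, F} : Set Pt))
    (r s : ℝ)
    (hr : B - D = r • (C - D)) (hs : B - F = s • (C - F)) (hrs : r = -s)
    (hsbtw : Sbtw ℝ D C F)
    (K : Pt) (hK : K ∉ lineThrough B C)
    (hbis : ∠ D K C = ∠ C K F) :
    ∠ B K C = Real.pi / 2 := by
  have hBC : B ≠ C := by
    simp only [List.pairwise_cons] at hdist
    exact hdist.1 C (by simp)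
  have hDF : D ≠ F := hsbtw.left_ne_right
  -- points on the line
  have hCmem : C ∈ lineThrough B C := right_mem_affineSpan_pair ℝ B C
  have hDmem : D ∈ lineThrough B C :=
    hcol.mem_affineSpan_of_mem_of_ne (by simp) (by simp) (by simp) hBC
  have hFmem : F ∈ lineThrough B C :=
    hcol.mem_affineSpan_of_mem_of_ne (by simp) (by simp) (by simp) hBC
  -- parameter c for C between D and F
  obtain ⟨c, hcIcc, hCc⟩ := hsbtw.wbtw
  rw [AffineMap.lineMap_apply] at hCc
  have hCc' : C - D = c • (F - D) := by
    rw [← hCc]; simp only [vsub_eq_sub, vadd_eq_add]; abel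
  have hc1 : c ≠ 1 := by
    intro h
    have h2 := hCc'
    rw [h, one_smul] at h2
    exact hsbtw.ne_right (sub_left_inj.mp h2)
  have hFD : F - D ≠ 0 := sub_ne_zero.mpr (Ne.symm hDF)
  -- harmonic relation
  have hCF' : C - F = (c - 1) • (F - D) := by
    have h1 : C - F = (C - D) - (F - D) := by abel
    rw [h1, hCc']; module
  have hBD : B - D = (r * c) • (F - D) := by rw [hr, hCc', smul_smul]
  have hBF : B - F = (r * c - 1) • (F - D) := by
    have h1 : B - F = (B - D) - (F - D) := by abel
    rw [h1, hBD]; module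
  have hsr : s = -r := by rw [hrs]; ring
  have hscalar : r * c - 1 = s * (c - 1) := by
    apply smul_left_injective ℝ hFD
    show (r * c - 1) • (F - D) = (s * (c - 1)) • (F - D)
    rw [← hBF, hs, hCF', smul_smul]
  have hr1 : r * (2 * c - 1) = 1 := by
    rw [hsr] at hscalar; linear_combination hscalar
  have h2c : 2 * c - 1 ≠ 0 := by
    intro h; rw [h, mul_zero] at hr1; norm_num at hr1
  -- vectors from K are nonzero
  have hd0 : D - K ≠ 0 := by
    intro h
    have hDK : D = K := sub_eq_zero.mp h
    exact hK (by rw [← hDK]; exact hDmem)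
  have hf0 : F - K ≠ 0 := by
    intro h
    have hFK : F = K := sub_eq_zero.mp h
    exact hK (by rw [← hFK]; exact hFmem)
  have hp0 : C - K ≠ 0 := by
    intro h
    have hCK : C = K := sub_eq_zero.mp h
    exact hK (by rw [← hCK]; exact hCmem)
  have hCK : C - K = (1 - c) • (D - K) + c • (F - K) := by
    have h1 : C - K = (C - D) + (D - K) := by abel
    rw [h1, hCc']; module
  have hBK : B - K = (1 - r * c) • (D - K) + (r * c) • (F - K) := by
    have h1 : B - K = (B - D) + (D - K) := by abel
    rw [h1, hBD]; module
  have ha0 : (0:ℝ) < ‖D - K‖ := norm_pos_iff.mpr hd0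
  have hg0 : (0:ℝ) < ‖F - K‖ := norm_pos_iff.mpr hf0
  have hp0' : (0:ℝ) < ‖C - K‖ := norm_pos_iff.mpr hp0
  -- K not on line DF, hence strict Cauchy-Schwarz
  have hne : ⟪D - K, F - K⟫ ≠ ‖D - K‖ * ‖F - K‖ := by
    intro h
    rw [inner_eq_norm_mul_iff_real] at h
    -- h : ‖F - K‖ • (D - K) = ‖D - K‖ • (F - K)
    have hm : ‖F - K‖ - ‖D - K‖ ≠ 0 := by
      intro hm
      have hfd : ‖F - K‖ = ‖D - K‖ := by linarith
      rw [hfd] at h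
      have hdf : D - K = F - K := smul_right_injective Pt (ne_of_gt ha0) h
      exact hDF (sub_left_inj.mp hdf)
    have hKeq : K = ((‖F - K‖ / (‖F - K‖ - ‖D - K‖)) • (D -ᵥ F) +ᵥ F : Pt) := by
      apply smul_right_injective Pt hm
      show (‖F - K‖ - ‖D - K‖) • K
          = (‖F - K‖ - ‖D - K‖) • ((‖F - K‖ / (‖F - K‖ - ‖D - K‖)) • (D -ᵥ F) +ᵥ F)
      simp only [vsub_eq_sub, vadd_eq_add, smul_add, smul_smul,
        mul_div_cancel₀ _ hm]
      linear_combination (norm := module) -h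
    exact hK (hKeq ▸ AffineSubspace.smul_vsub_vadd_mem _ _ hDmem hFmem hFmem)
  -- bisector condition as inner-product identity
  have hcos := congrArg Real.cos hbis
  unfold EuclideanGeometry.angle at hcos
  rw [InnerProductGeometry.cos_angle, InnerProductGeometry.cos_angle] at hcos
  simp only [vsub_eq_sub] at hcos
  have hdd : ⟪D - K, D - K⟫ = ‖D - K‖ ^ 2 := real_inner_self_eq_norm_sq _
  have hff : ⟪F - K, F - K⟫ = ‖F - K‖ ^ 2 := real_inner_self_eq_norm_sq _
  have hinnerDC : ⟪D - K, C - K⟫ = (1 - c) * ‖D - K‖ ^ 2 + c * ⟪D - K, F - K⟫ := by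
    rw [hCK, inner_add_right, real_inner_smul_right, real_inner_smul_right, hdd]
  have hinnerCF : ⟪C - K, F - K⟫ = (1 - c) * ⟪D - K, F - K⟫ + c * ‖F - K‖ ^ 2 := by
    rw [hCK, inner_add_left, real_inner_smul_left, real_inner_smul_left, hff]
  rw [hinnerDC, hinnerCF] at hcos
  have hEq : ((1 - c) * ‖D - K‖ ^ 2 + c * ⟪D - K, F - K⟫) * ‖F - K‖
      = ((1 - c) * ⟪D - K, F - K⟫ + c * ‖F - K‖ ^ 2) * ‖D - K‖ := by
    rw [div_eq_div_iff (by positivity) (by positivity)] at hcos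
    have h2 : ‖C - K‖ * (((1 - c) * ‖D - K‖ ^ 2 + c * ⟪D - K, F - K⟫) * ‖F - K‖)
        = ‖C - K‖ * (((1 - c) * ⟪D - K, F - K⟫ + c * ‖F - K‖ ^ 2) * ‖D - K‖) := by
      linear_combination hcos
    exact mul_left_cancel₀ (ne_of_gt hp0') h2
  have hfact : ((1 - c) * ‖D - K‖ - c * ‖F - K‖) * (‖D - K‖ * ‖F - K‖ - ⟪D - K, F - K⟫)
      = 0 := by linear_combination hEq
  have hkey2 : (1 - c) * ‖D - K‖ = c * ‖F - K‖ := by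
    rcases mul_eq_zero.mp hfact with h | h
    · linarith
    · exact absurd (by linarith : ⟪D - K, F - K⟫ = ‖D - K‖ * ‖F - K‖) hne
  -- conclude perpendicularity
  show InnerProductGeometry.angle (B -ᵥ K) (C -ᵥ K) = Real.pi / 2
  rw [← InnerProductGeometry.inner_eq_zero_iff_angle_eq_pi_div_two]
  simp only [vsub_eq_sub]
  have hinner : ⟪B - K, C - K⟫ = (1 - r * c) * (1 - c) * ‖D - K‖ ^ 2
      + ((1 - r * c) * c + r * c * (1 - c)) * ⟪D - K, F - K⟫
      + r * c * c * ‖F - K‖ ^ 2 := by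
    rw [hBK, hCK]
    simp only [inner_add_left, inner_add_right, real_inner_smul_left,
      real_inner_smul_right, hdd, hff, real_inner_comm (F - K) (D - K)]
    ring
  rw [hinner]
  have e1 : r * c * (2 * c - 1) = c := by linear_combination c * hr1
  have e2 : (1 - r * c) * (2 * c - 1) = c - 1 := by linear_combination (-c) * hr1
  have hmul : (2 * c - 1) * ((1 - r * c) * (1 - c) * ‖D - K‖ ^ 2
      + ((1 - r * c) * c + r * c * (1 - c)) * ⟪D - K, F - K⟫
      + r * c * c * ‖F - K‖ ^ 2) = 0 := by
    linear_combination ((1 - c) * ‖D - K‖ ^ 2 + c * ⟪D - K, F - K⟫) * e2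
      + ((1 - c) * ⟪D - K, F - K⟫ + c * ‖F - K‖ ^ 2) * e1
      - ((1 - c) * ‖D - K‖ + c * ‖F - K‖) * hkey2
  rcases mul_eq_zero.mp hmul with h | h
  · exact absurd h h2c
  · exact h
end
end

section
/- Let B, C, D, E be a complete quadrangle in ℝ² such that the lines BE and CD meet in a point F₀. Let Δ be a line that is not parallel to any of the six side lines BC, DE, BE, CD, BD, CE and does not pass through any point of pairwise intersection of these six lines. Let I = Δ∩BC, K = Δ∩DE, P = Δ∩BE, Q = Δ∩CD. Then QI·QK·CF₀·BP·DF₀·EP = PI·PK·CQ·BF₀·DQ·EF₀; that is, the ratio of rectangles (QI·QK)/(PI·PK) is composed of the four ratios CQ/CF₀, BF₀/BP, DQ/DF₀ and EF₀/EP. -/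
noncomputable section

open EuclideanGeometry

/-- The six side lines of a complete quadrangle B, C, D, E. -/
def sides (B C D E : Pt) : Set (AffineSubspace ℝ Pt) :=
  {lineThrough B C, lineThrough D E, lineThrough B E,
   lineThrough C D, lineThrough B D, lineThrough C E}

private lemma coeff_of_mem_line' {A B X : Pt} (h : X ∈ line[ℝ, A, B]) :
    ∃ r : ℝ, r • (B - A) = X - A := by
  have h' : (X -ᵥ A) +ᵥ A ∈ line[ℝ, A, B] := by simpa using h
  simpa using vadd_left_mem_affineSpan_pair.mp h'

/-- The ratio of rectangles (QI·QK)/(PI·PK) is composed of the ratios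
CQ/CF₀, BF₀/BP, DQ/DF₀ and EF₀/EP. -/
theorem desargues_quadrangle_ratio_composition
    (B C D E : Pt)
    (hBCD : ¬ Collinear ℝ ({B, C, D} : Set Pt))
    (hBCE : ¬ Collinear ℝ ({B, C, E} : Set Pt))
    (hBDE : ¬ Collinear ℝ ({B, D, E} : Set Pt))
    (hCDE : ¬ Collinear ℝ ({C, D, E} : Set Pt))
    (F₀ : Pt) (hF₀1 : F₀ ∈ lineThrough B E) (hF₀2 : F₀ ∈ lineThrough C D)
    (Δ : AffineSubspace ℝ Pt) (hΔ : IsLine Δ)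
    (hnpar : ∀ s ∈ sides B C D E, ¬ AffineSubspace.Parallel Δ s)
    (havoid : ∀ s₁ ∈ sides B C D E, ∀ s₂ ∈ sides B C D E, s₁ ≠ s₂ →
      ∀ X : Pt, X ∈ s₁ → X ∈ s₂ → X ∉ Δ)
    (I K P Q : Pt)
    (hI : I ∈ Δ ∧ I ∈ lineThrough B C)
    (hK : K ∈ Δ ∧ K ∈ lineThrough D E)
    (hP : P ∈ Δ ∧ P ∈ lineThrough B E)
    (hQ : Q ∈ Δ ∧ Q ∈ lineThrough C D) :
    dist Q I * dist Q K * dist C F₀ * dist B P * dist D F₀ * dist E P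
      = dist P I * dist P K * dist C Q * dist B F₀ * dist D Q * dist E F₀ := by
  -- basic nondegeneracies
  have hF₀1' : F₀ ∈ line[ℝ, B, E] := hF₀1
  have hF₀2' : F₀ ∈ line[ℝ, C, D] := hF₀2
  have hBF : B ≠ F₀ := by
    rintro rfl
    exact hBCD (collinear_insert_of_mem_affineSpan_pair hF₀2')
  have hCF : C ≠ F₀ := by
    rintro rfl
    have h := collinear_insert_of_mem_affineSpan_pair hF₀1'
    rw [Set.insert_comm] at h
    exact hBCE h
  -- P ≠ Q
  have hBECD : lineThrough B E ≠ lineThrough C D := by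
    intro h
    have hB : B ∈ lineThrough C D := by
      rw [← h]; exact left_mem_affineSpan_pair ℝ B E
    exact hBCD (collinear_insert_of_mem_affineSpan_pair hB)
  have hPQ : P ≠ Q := by
    rintro rfl
    exact havoid (lineThrough B E) (by simp [sides]) (lineThrough C D) (by simp [sides])
      hBECD P hP.2 hQ.2 hP.1
  -- F₀, B, C are not collinear
  have hFBC : ¬ Collinear ℝ ({F₀, B, C} : Set Pt) := by
    intro h
    have hFCD : Collinear ℝ ({F₀, C, D} : Set Pt) :=
      collinear_insert_of_mem_affineSpan_pair hF₀2'
    have hD' : D ∈ line[ℝ, F₀, C] :=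
      hFCD.mem_affineSpan_of_mem_of_ne (by simp) (by simp) (by simp) hCF.symm
    have hB' : B ∈ line[ℝ, F₀, C] :=
      h.mem_affineSpan_of_mem_of_ne (by simp) (by simp) (by simp) hCF.symm
    have hC' : C ∈ line[ℝ, F₀, C] := right_mem_affineSpan_pair ℝ F₀ C
    exact hBCD (collinear_triple_of_mem_affineSpan_pair hB' hC' hD')
  -- linear independence of B - F₀ and C - F₀
  have hindep : ∀ a b : ℝ, a • (B - F₀) + b • (C - F₀) = 0 → a = 0 ∧ b = 0 := by
    intro a b hab
    by_cases hb : b = 0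
    · subst hb
      have ha : a • (B - F₀) = 0 := by simpa using hab
      have hBne : B - F₀ ≠ 0 := sub_ne_zero.mpr hBF
      rcases smul_eq_zero.mp ha with ha | h0
      · exact ⟨ha, rfl⟩
      · exact absurd h0 hBne
    · exfalso
      have h1 : (-a) • (B - F₀) = b • (C - F₀) := by
        linear_combination (norm := module) -hab
      have h2 : (-a/b) • (B -ᵥ F₀) = C -ᵥ F₀ := by
        show (-a/b) • (B - F₀) = C - F₀
        calc (-a/b) • (B - F₀) = b⁻¹ • ((-a) • (B - F₀)) := by
              rw [smul_smul]; ring_nf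
          _ = b⁻¹ • (b • (C - F₀)) := by rw [h1]
          _ = C - F₀ := by rw [smul_smul, inv_mul_cancel₀ hb, one_smul]
      have hCmem : C ∈ line[ℝ, F₀, B] := by
        have := vadd_left_mem_affineSpan_pair.mpr ⟨-a/b, h2⟩
        simpa using this
      have hcol := collinear_insert_of_mem_affineSpan_pair hCmem
      rw [Set.insert_comm, Set.pair_comm C B] at hcol
      exact hFBC hcol
  -- coefficients on line B E (through F₀ and B)
  have hP2' : P ∈ line[ℝ, B, E] := hP.2
  have hQ2' : Q ∈ line[ℝ, C, D] := hQ.2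
  have colBE : Collinear ℝ ({F₀, P, B, E} : Set Pt) :=
    collinear_insert_insert_of_mem_affineSpan_pair hF₀1' hP2'
  have colCD : Collinear ℝ ({F₀, Q, C, D} : Set Pt) :=
    collinear_insert_insert_of_mem_affineSpan_pair hF₀2' hQ2'
  obtain ⟨ε, hε⟩ : ∃ r : ℝ, r • (B - F₀) = E - F₀ :=
    coeff_of_mem_line' (colBE.mem_affineSpan_of_mem_of_ne (by simp) (by simp) (by simp) hBF.symm)
  obtain ⟨p, hp⟩ : ∃ r : ℝ, r • (B - F₀) = P - F₀ :=
    coeff_of_mem_line' (colBE.mem_affineSpan_of_mem_of_ne (by simp) (by simp) (by simp) hBF.symm)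
  obtain ⟨δ, hδ⟩ : ∃ r : ℝ, r • (C - F₀) = D - F₀ :=
    coeff_of_mem_line' (colCD.mem_affineSpan_of_mem_of_ne (by simp) (by simp) (by simp) hCF.symm)
  obtain ⟨q, hq⟩ : ∃ r : ℝ, r • (C - F₀) = Q - F₀ :=
    coeff_of_mem_line' (colCD.mem_affineSpan_of_mem_of_ne (by simp) (by simp) (by simp) hCF.symm)
  -- coefficients of I and K on Δ = line P Q
  obtain ⟨x, y, hxy, rfl⟩ := hΔ
  have colIPQ : Collinear ℝ ({I, P, Q} : Set Pt) :=
    collinear_triple_of_mem_affineSpan_pair hI.1 hP.1 hQ.1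
  have colKPQ : Collinear ℝ ({K, P, Q} : Set Pt) :=
    collinear_triple_of_mem_affineSpan_pair hK.1 hP.1 hQ.1
  obtain ⟨t, ht⟩ : ∃ r : ℝ, r • (Q - P) = I - P :=
    coeff_of_mem_line' (colIPQ.mem_affineSpan_of_mem_of_ne (by simp) (by simp) (by simp) hPQ)
  obtain ⟨s, hs⟩ : ∃ r : ℝ, r • (Q - P) = K - P :=
    coeff_of_mem_line' (colKPQ.mem_affineSpan_of_mem_of_ne (by simp) (by simp) (by simp) hPQ)
  obtain ⟨l, hl⟩ : ∃ r : ℝ, r • (C - B) = I - B := coeff_of_mem_line' hI.2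
  obtain ⟨m, hm⟩ : ∃ r : ℝ, r • (E - D) = K - D := coeff_of_mem_line' hK.2
  -- extract scalar equations
  have hveq1 : ((1 - l) - (1 - t) * p) • (B - F₀) + (l - t * q) • (C - F₀) = 0 := by
    linear_combination (norm := module) hl - ht + (t - 1) • hp - t • hq
  have hveq2 : (m * ε - (1 - s) * p) • (B - F₀) + ((1 - m) * δ - s * q) • (C - F₀) = 0 := by
    linear_combination (norm := module) hm - hs + (s - 1) • hp - s • hq + m • hε + (1 - m) • hδ
  obtain ⟨e1, e2⟩ := hindep _ _ hveq1
  obtain ⟨e3, e4⟩ := hindep _ _ hveq2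
  -- the two Menelaus identities
  have id1 : t * (q - 1) = (1 - t) * (1 - p) := by linear_combination -e2 - e1
  have id2 : s * ε * (q - δ) = (1 - s) * δ * (ε - p) := by
    linear_combination (-δ) * e3 - ε * e4
  -- rewrite the distances
  have dQI : dist Q I = |1 - t| * ‖Q - P‖ := by
    rw [dist_eq_norm, show Q - I = (1 - t) • (Q - P) from by
      linear_combination (norm := module) ht, norm_smul, Real.norm_eq_abs]
  have dQK : dist Q K = |1 - s| * ‖Q - P‖ := by
    rw [dist_eq_norm, show Q - K = (1 - s) • (Q - P) from by
      linear_combination (norm := module) hs, norm_smul, Real.norm_eq_abs]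
  have dPI : dist P I = |t| * ‖Q - P‖ := by
    rw [dist_eq_norm, show P - I = (-t) • (Q - P) from by
      linear_combination (norm := module) ht, norm_smul, Real.norm_eq_abs, abs_neg]
  have dPK : dist P K = |s| * ‖Q - P‖ := by
    rw [dist_eq_norm, show P - K = (-s) • (Q - P) from by
      linear_combination (norm := module) hs, norm_smul, Real.norm_eq_abs, abs_neg]
  have dCF : dist C F₀ = ‖C - F₀‖ := dist_eq_norm _ _
  have dBF : dist B F₀ = ‖B - F₀‖ := dist_eq_norm _ _
  have dDF : dist D F₀ = |δ| * ‖C - F₀‖ := by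
    rw [dist_eq_norm, ← hδ, norm_smul, Real.norm_eq_abs]
  have dEF : dist E F₀ = |ε| * ‖B - F₀‖ := by
    rw [dist_eq_norm, ← hε, norm_smul, Real.norm_eq_abs]
  have dBP : dist B P = |1 - p| * ‖B - F₀‖ := by
    rw [dist_eq_norm, show B - P = (1 - p) • (B - F₀) from by
      linear_combination (norm := module) hp, norm_smul, Real.norm_eq_abs]
  have dEP : dist E P = |ε - p| * ‖B - F₀‖ := by
    rw [dist_eq_norm, show E - P = (ε - p) • (B - F₀) from by
      linear_combination (norm := module) hp - hε, norm_smul, Real.norm_eq_abs]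
  have dCQ : dist C Q = |1 - q| * ‖C - F₀‖ := by
    rw [dist_eq_norm, show C - Q = (1 - q) • (C - F₀) from by
      linear_combination (norm := module) hq, norm_smul, Real.norm_eq_abs]
  have dDQ : dist D Q = |δ - q| * ‖C - F₀‖ := by
    rw [dist_eq_norm, show D - Q = (δ - q) • (C - F₀) from by
      linear_combination (norm := module) hq - hδ, norm_smul, Real.norm_eq_abs]
  rw [dQI, dQK, dPI, dPK, dCF, dBF, dDF, dEF, dBP, dEP, dCQ, dDQ]
  -- the scalar identities in absolute-value form
  have K1 : |t| * |1 - q| = |1 - t| * |1 - p| := by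
    rw [abs_sub_comm 1 q, ← abs_mul, ← abs_mul, id1]
  have K2 : |s| * |ε| * |δ - q| = |1 - s| * |δ| * |ε - p| := by
    rw [abs_sub_comm δ q, ← abs_mul, ← abs_mul, ← abs_mul, ← abs_mul, id2]
  -- conclude
  linear_combination
    (-(|s| * |ε| * |δ - q|) * (‖Q - P‖^2 * ‖C - F₀‖^2 * ‖B - F₀‖^2)) * K1
    - ((|1 - t| * |1 - p|) * (‖Q - P‖^2 * ‖C - F₀‖^2 * ‖B - F₀‖^2)) * K2
end
end

section
/- (The case of two parallel opposite sides.) Let B, C, D, E be a complete quadrangle in ℝ² such that the lines BC and DE are parallel (and distinct). Let Δ be a line not parallel to any of the lines BC, DE, BE, CD and not passing through any of B, C, D, E nor through the intersection point of BE and CD. Let I = Δ∩BC, K = Δ∩DE, P = Δ∩BE, Q = Δ∩CD. Then IC·IB·KQ·KP = KD·KE·IQ·IP; that is, the rectangle IC·IB is to the rectangle KD·KE as the rectangle IQ·IP is to the rectangle KQ·KP. -/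
noncomputable section

open EuclideanGeometry

lemma aux_vec (v i k b e : Pt) (hik : ∃ l : ℝ, i = l • k) (hbe : ∃ m : ℝ, b = m • e)
    (hib : i - b ∈ Submodule.span ℝ {v}) (hke : k - e ∈ Submodule.span ℝ {v})
    (he : e ∉ Submodule.span ℝ {v}) :
    ∃ l : ℝ, i = l • k ∧ i - b = l • (k - e) := by
  obtain ⟨l, hl⟩ := hik
  obtain ⟨m, hm⟩ := hbe
  have key : i - b - l • (k - e) = (l - m) • e := by
    rw [hl, hm]; module
  by_cases hlm : l = m
  · refine ⟨l, hl, ?_⟩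
    have h0 : i - b - l • (k - e) = 0 := by rw [key, hlm, sub_self, zero_smul]
    exact sub_eq_zero.mp h0
  · exfalso
    apply he
    have hmem : (l - m) • e ∈ Submodule.span ℝ {v} := by
      rw [← key]
      exact Submodule.sub_mem _ hib (Submodule.smul_mem _ _ hke)
    have h2 := Submodule.smul_mem _ (l - m)⁻¹ hmem
    rwa [smul_smul, inv_mul_cancel₀ (sub_ne_zero.mpr hlm), one_smul] at h2

/-- Similar triangles ratio lemma. -/
lemma ratio (B E I K P : Pt) (v : Pt)
    (hIB : I -ᵥ B ∈ Submodule.span ℝ {v}) (hKE : K -ᵥ E ∈ Submodule.span ℝ {v})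
    (hcol1 : Collinear ℝ ({P, K, I} : Set Pt)) (hcol2 : Collinear ℝ ({P, E, B} : Set Pt))
    (hPK : P ≠ K) (hPE : P ≠ E) (hEPv : E -ᵥ P ∉ Submodule.span ℝ {v}) :
    ∃ l : ℝ, dist I P = |l| * dist K P ∧ dist I B = |l| * dist K E := by
  have hI : I ∈ line[ℝ, P, K] :=
    hcol1.mem_affineSpan_of_mem_of_ne (Set.mem_insert _ _) (by simp) (by simp) hPK
  have hB : B ∈ line[ℝ, P, E] :=
    hcol2.mem_affineSpan_of_mem_of_ne (Set.mem_insert _ _) (by simp) (by simp) hPE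
  have hI' : ∃ l : ℝ, I -ᵥ P = l • (K -ᵥ P) := by
    rw [show I = (I -ᵥ P) +ᵥ P from (vsub_vadd _ _).symm,
      vadd_left_mem_affineSpan_pair] at hI
    obtain ⟨r, hr⟩ := hI
    exact ⟨r, hr.symm⟩
  have hB' : ∃ m : ℝ, B -ᵥ P = m • (E -ᵥ P) := by
    rw [show B = (B -ᵥ P) +ᵥ P from (vsub_vadd _ _).symm,
      vadd_left_mem_affineSpan_pair] at hB
    obtain ⟨r, hr⟩ := hB
    exact ⟨r, hr.symm⟩
  obtain ⟨l, hl1, hl2⟩ := aux_vec v (I -ᵥ P) (K -ᵥ P) (B -ᵥ P) (E -ᵥ P) hI' hB'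
    (by rwa [vsub_sub_vsub_cancel_right]) (by rwa [vsub_sub_vsub_cancel_right]) hEPv
  rw [vsub_sub_vsub_cancel_right, vsub_sub_vsub_cancel_right] at hl2
  refine ⟨l, ?_, ?_⟩
  · rw [dist_eq_norm_vsub Pt, dist_eq_norm_vsub Pt, hl1, norm_smul, Real.norm_eq_abs]
  · rw [dist_eq_norm_vsub Pt, dist_eq_norm_vsub Pt, hl2, norm_smul, Real.norm_eq_abs]

/-- The case of two parallel opposite sides of the quadrangle. -/
theorem desargues_quadrangle_parallel_sides
    (B C D E : Pt)
    (hBCD : ¬ Collinear ℝ ({B, C, D} : Set Pt))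
    (hBCE : ¬ Collinear ℝ ({B, C, E} : Set Pt))
    (hBDE : ¬ Collinear ℝ ({B, D, E} : Set Pt))
    (hCDE : ¬ Collinear ℝ ({C, D, E} : Set Pt))
    (hpar : AffineSubspace.Parallel (lineThrough B C) (lineThrough D E))
    (hne : lineThrough B C ≠ lineThrough D E)
    (Δ : AffineSubspace ℝ Pt) (hΔ : IsLine Δ)
    (hnpar : ∀ s ∈ ({lineThrough B C, lineThrough D E, lineThrough B E,
        lineThrough C D} : Set (AffineSubspace ℝ Pt)),
      ¬ AffineSubspace.Parallel Δ s)
    (hB : B ∉ Δ) (hC : C ∉ Δ) (hD : D ∉ Δ) (hE : E ∉ Δ)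
    (hF : ∀ X : Pt, X ∈ lineThrough B E → X ∈ lineThrough C D → X ∉ Δ)
    (I K P Q : Pt)
    (hI : I ∈ Δ ∧ I ∈ lineThrough B C)
    (hK : K ∈ Δ ∧ K ∈ lineThrough D E)
    (hP : P ∈ Δ ∧ P ∈ lineThrough B E)
    (hQ : Q ∈ Δ ∧ Q ∈ lineThrough C D) :
    dist I C * dist I B * dist K Q * dist K P
      = dist K D * dist K E * dist I Q * dist I P := by
  obtain ⟨x, y, hxy, rfl⟩ := hΔ
  set v : Pt := C -ᵥ B with hv
  -- direction facts
  have hdirBC : (lineThrough B C).direction = Submodule.span ℝ {v} := by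
    rw [lineThrough, direction_affineSpan, vectorSpan_pair_rev]
  have hdirDE : (lineThrough D E).direction = Submodule.span ℝ {E -ᵥ D} := by
    rw [lineThrough, direction_affineSpan, vectorSpan_pair_rev]
  have hspan : Submodule.span ℝ {E -ᵥ D} = Submodule.span ℝ {v} := by
    rw [← hdirDE, ← hdirBC, hpar.direction_eq]
  -- memberships in span v
  have hIB : I -ᵥ B ∈ Submodule.span ℝ {v} := by
    have := AffineSubspace.vsub_mem_direction hI.2 (left_mem_affineSpan_pair ℝ B C)
    rwa [hdirBC] at this
  have hIC : I -ᵥ C ∈ Submodule.span ℝ {v} := by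
    have := AffineSubspace.vsub_mem_direction hI.2 (right_mem_affineSpan_pair ℝ B C)
    rwa [hdirBC] at this
  have hKE : K -ᵥ E ∈ Submodule.span ℝ {v} := by
    have := AffineSubspace.vsub_mem_direction hK.2 (right_mem_affineSpan_pair ℝ D E)
    rwa [hdirDE, hspan] at this
  have hKD : K -ᵥ D ∈ Submodule.span ℝ {v} := by
    have := AffineSubspace.vsub_mem_direction hK.2 (left_mem_affineSpan_pair ℝ D E)
    rwa [hdirDE, hspan] at this
  -- collinearity on Δ
  have hcolPKI : Collinear ℝ ({P, K, I} : Set Pt) :=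
    collinear_triple_of_mem_affineSpan_pair hP.1 hK.1 hI.1
  have hcolQKI : Collinear ℝ ({Q, K, I} : Set Pt) :=
    collinear_triple_of_mem_affineSpan_pair hQ.1 hK.1 hI.1
  -- collinearity on the sides BE and CD
  have hcolPEB : Collinear ℝ ({P, E, B} : Set Pt) :=
    collinear_triple_of_mem_affineSpan_pair hP.2
      (right_mem_affineSpan_pair ℝ B E) (left_mem_affineSpan_pair ℝ B E)
  have hcolQDC : Collinear ℝ ({Q, D, C} : Set Pt) :=
    collinear_triple_of_mem_affineSpan_pair hQ.2
      (right_mem_affineSpan_pair ℝ C D) (left_mem_affineSpan_pair ℝ C D)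
  -- nondegeneracies
  have hPE : P ≠ E := fun h => hE (h ▸ hP.1)
  have hQD : Q ≠ D := fun h => hD (h ▸ hQ.1)
  have hPK : P ≠ K := by
    intro h
    have hPDE : P ∈ lineThrough D E := h ▸ hK.2
    have hcolPED : Collinear ℝ ({P, E, D} : Set Pt) :=
      collinear_triple_of_mem_affineSpan_pair hPDE
        (right_mem_affineSpan_pair ℝ D E) (left_mem_affineSpan_pair ℝ D E)
    have hBmem : B ∈ line[ℝ, P, E] :=
      hcolPEB.mem_affineSpan_of_mem_of_ne (Set.mem_insert _ _) (by simp) (by simp) hPE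
    have hDmem : D ∈ line[ℝ, P, E] :=
      hcolPED.mem_affineSpan_of_mem_of_ne (Set.mem_insert _ _) (by simp) (by simp) hPE
    apply hBDE
    refine (collinear_insert_insert_of_mem_affineSpan_pair hBmem hDmem).subset ?_
    intro z hz
    simp only [Set.mem_insert_iff, Set.mem_singleton_iff] at hz ⊢
    tauto
  have hQK : Q ≠ K := by
    intro h
    have hQDE : Q ∈ lineThrough D E := h ▸ hK.2
    have hcolQDE : Collinear ℝ ({Q, D, E} : Set Pt) :=
      collinear_triple_of_mem_affineSpan_pair hQDE
        (left_mem_affineSpan_pair ℝ D E) (right_mem_affineSpan_pair ℝ D E)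
    have hEmem : E ∈ line[ℝ, Q, D] :=
      hcolQDE.mem_affineSpan_of_mem_of_ne (Set.mem_insert _ _) (by simp) (by simp) hQD
    have hCmem : C ∈ line[ℝ, Q, D] :=
      hcolQDC.mem_affineSpan_of_mem_of_ne (Set.mem_insert _ _) (by simp) (by simp) hQD
    apply hCDE
    refine (collinear_insert_insert_of_mem_affineSpan_pair hEmem hCmem).subset ?_
    intro z hz
    simp only [Set.mem_insert_iff, Set.mem_singleton_iff] at hz ⊢
    tauto
  have hEPv : E -ᵥ P ∉ Submodule.span ℝ {v} := by
    intro hmem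
    have hBmem : B ∈ line[ℝ, P, E] :=
      hcolPEB.mem_affineSpan_of_mem_of_ne (Set.mem_insert _ _) (by simp) (by simp) hPE
    have hBP : B -ᵥ P ∈ Submodule.span ℝ {E -ᵥ P} := by
      have := AffineSubspace.vsub_mem_direction hBmem (left_mem_affineSpan_pair ℝ P E)
      rwa [direction_affineSpan, vectorSpan_pair_rev] at this
    have hBP' : B -ᵥ P ∈ Submodule.span ℝ {v} :=
      (Submodule.span_le.2 (Set.singleton_subset_iff.2 hmem)) hBP
    have hEB : E -ᵥ B ∈ Submodule.span ℝ {v} := by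
      have := Submodule.sub_mem _ hmem hBP'
      rwa [vsub_sub_vsub_cancel_right] at this
    apply hBCE
    have hEmem : E ∈ line[ℝ, B, C] := by
      rw [show E = (E -ᵥ B) +ᵥ B from (vsub_vadd _ _).symm, vadd_left_mem_affineSpan_pair]
      obtain ⟨r, hr⟩ := Submodule.mem_span_singleton.1 hEB
      exact ⟨r, hr⟩
    refine (collinear_insert_of_mem_affineSpan_pair hEmem).subset ?_
    intro z hz
    simp only [Set.mem_insert_iff, Set.mem_singleton_iff] at hz ⊢
    tauto
  have hDQv : D -ᵥ Q ∉ Submodule.span ℝ {v} := by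
    intro hmem
    have hCmem : C ∈ line[ℝ, Q, D] :=
      hcolQDC.mem_affineSpan_of_mem_of_ne (Set.mem_insert _ _) (by simp) (by simp) hQD
    have hCQ : C -ᵥ Q ∈ Submodule.span ℝ {D -ᵥ Q} := by
      have := AffineSubspace.vsub_mem_direction hCmem (left_mem_affineSpan_pair ℝ Q D)
      rwa [direction_affineSpan, vectorSpan_pair_rev] at this
    have hCQ' : C -ᵥ Q ∈ Submodule.span ℝ {v} :=
      (Submodule.span_le.2 (Set.singleton_subset_iff.2 hmem)) hCQ
    have hDC : D -ᵥ C ∈ Submodule.span ℝ {v} := by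
      have := Submodule.sub_mem _ hmem hCQ'
      rwa [vsub_sub_vsub_cancel_right] at this
    have hDB : D -ᵥ B ∈ Submodule.span ℝ {v} := by
      have := Submodule.add_mem _ hDC (Submodule.mem_span_singleton_self v)
      rwa [hv, vsub_add_vsub_cancel] at this
    apply hBCD
    have hDmem : D ∈ line[ℝ, B, C] := by
      rw [show D = (D -ᵥ B) +ᵥ B from (vsub_vadd _ _).symm, vadd_left_mem_affineSpan_pair]
      obtain ⟨r, hr⟩ := Submodule.mem_span_singleton.1 hDB
      exact ⟨r, hr⟩
    refine (collinear_insert_of_mem_affineSpan_pair hDmem).subset ?_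
    intro z hz
    simp only [Set.mem_insert_iff, Set.mem_singleton_iff] at hz ⊢
    tauto
  obtain ⟨l, hl1, hl2⟩ := ratio B E I K P v hIB hKE hcolPKI hcolPEB hPK hPE hEPv
  obtain ⟨m, hm1, hm2⟩ := ratio C D I K Q v hIC hKD hcolQKI hcolQDC hQK hQD hDQv
  rw [hl1, hl2, hm1, hm2]
  ring
end
end

section
/- (Desargues' involution theorem for a pencil of conics.) Let 𝒞 = {(x,y) ∈ ℝ² : a·x² + b·x·y + c·y² + d·x + e·y + g = 0} with (a,b,c) ≠ (0,0,0). Let B, C, D, E be four pairwise distinct points of 𝒞, no three collinear. Let Δ be a line that is not parallel to any of the six side lines BC, DE, BE, CD, BD, CE and does not pass through any point of pairwise intersection of these six lines, and let L and M be two distinct points of 𝒞 ∩ Δ. Let I = Δ∩BC, K = Δ∩DE, P = Δ∩BE, Q = Δ∩CD. Then QL·QM·PI·PK = PL·PM·QI·QK. -/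
noncomputable section

open EuclideanGeometry

/-
Conics through B, C, D, E form a pencil: with ℓ_UW the equation of line UW, the conic's
polynomial is κ ℓ_BC ℓ_DE + μ ℓ_BE ℓ_CD. (Subtracting a multiple of ℓ_BE ℓ_CD makes it vanish at
the midpoint of BC, hence on all of line BC, so it factors as ℓ_BC times an affine function
vanishing at D and E.)
On Δ, parametrised affinely by t, the four side equations become nonzero multiples of t - i, t - k,
t - p, t - q, so L and M are the roots t = l, m of A (t - i)(t - k) + A' (t - p)(t - q), which is
therefore (A + A')(t - l)(t - m). Evaluating at t = p and t = q and dividing gives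
(q - l)(q - m)(p - i)(p - k) = (p - l)(p - m)(q - i)(q - k), and distances along Δ are proportional
to differences of parameters.
-/

open AffineMap (lineMap)

def conicPoly (a b c d e g : ℝ) (X : Pt) : ℝ :=
  a * X 0 ^ 2 + b * (X 0 * X 1) + c * X 1 ^ 2 + d * X 0 + e * X 1 + g

def lineForm (U W X : Pt) : ℝ := (W 0 - U 0) * (X 1 - U 1) - (W 1 - U 1) * (X 0 - U 0)

lemma Pt.ext_coord {X Y : Pt} (h0 : X 0 = Y 0) (h1 : X 1 = Y 1) : X = Y := by
  ext i
  fin_cases i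
  exacts [h0, h1]

lemma lineMap_apply_coord (U W : Pt) (t : ℝ) (i : Fin 2) :
    lineMap U W t i = U i + t * (W i - U i) := by
  simp only [AffineMap.lineMap_apply_module, PiLp.add_apply, PiLp.smul_apply, smul_eq_mul]
  ring

lemma midpoint_apply_coord (U W : Pt) (i : Fin 2) : midpoint ℝ U W i = (U i + W i) / 2 := by
  rw [midpoint_eq_smul_add, PiLp.smul_apply, PiLp.add_apply, smul_eq_mul, invOf_eq_inv]
  ring

lemma lineForm_self_left (U W : Pt) : lineForm U W U = 0 := by
  simp only [lineForm]
  ring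

lemma lineForm_self_right (U W : Pt) : lineForm U W W = 0 := by
  simp only [lineForm]
  ring

lemma lineForm_lineMap (U W X Y : Pt) (t : ℝ) :
    lineForm U W (lineMap X Y t) = (1 - t) * lineForm U W X + t * lineForm U W Y := by
  simp only [lineForm, lineMap_apply_coord]
  ring

lemma sq_add_sq_sub_ne_zero {U W : Pt} (h : U ≠ W) : (W 0 - U 0) ^ 2 + (W 1 - U 1) ^ 2 ≠ 0 := by
  have hd : dist W U ^ 2 = (W 0 - U 0) ^ 2 + (W 1 - U 1) ^ 2 := by
    rw [EuclideanSpace.dist_eq, Real.sq_sqrt (by positivity), Fin.sum_univ_two, Real.dist_eq,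
      Real.dist_eq, sq_abs, sq_abs]
  rw [← hd]
  exact pow_ne_zero 2 (dist_ne_zero.2 h.symm)

lemma lineForm_eq_zero_iff {U W Z : Pt} (hUW : U ≠ W) :
    lineForm U W Z = 0 ↔ Z ∈ lineThrough U W := by
  rw [lineThrough, mem_affineSpan_pair_iff_exists_lineMap_eq]
  constructor
  · intro h
    have hN := sq_add_sq_sub_ne_zero hUW
    refine ⟨((Z 0 - U 0) * (W 0 - U 0) + (Z 1 - U 1) * (W 1 - U 1)) /
      ((W 0 - U 0) ^ 2 + (W 1 - U 1) ^ 2), ?_⟩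
    simp only [lineForm] at h
    apply Pt.ext_coord <;> simp only [lineMap_apply_coord] <;> field_simp
    · linear_combination (W 1 - U 1) * h
    · linear_combination -(W 0 - U 0) * h
  · rintro ⟨t, rfl⟩
    rw [lineForm_lineMap, lineForm_self_left, lineForm_self_right, mul_zero, mul_zero, add_zero]

lemma notMem_lineThrough_of_not_collinear {U W Z : Pt} (h : ¬ Collinear ℝ ({U, W, Z} : Set Pt)) :
    Z ∉ lineThrough U W := fun hZ => h <| collinear_triple_of_mem_affineSpan_pair
  (left_mem_affineSpan_pair ℝ U W) (right_mem_affineSpan_pair ℝ U W) hZ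

lemma lineForm_ne_of_not_parallel {U W X Y : Pt} (hUW : U ≠ W) (hXY : X ≠ Y)
    (h : ¬ (lineThrough X Y).Parallel (lineThrough U W)) : lineForm U W X ≠ lineForm U W Y := by
  contrapose! h
  have hZ : lineForm U W (Y - X + U) = 0 := by
    simp only [lineForm, PiLp.add_apply, PiLp.sub_apply] at h ⊢
    linear_combination -h
  obtain ⟨r, hr⟩ := mem_affineSpan_pair_iff_exists_lineMap_eq.1 ((lineForm_eq_zero_iff hUW).1 hZ)
  rw [AffineMap.lineMap_apply, vsub_eq_sub, vadd_eq_add, add_left_inj] at hr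
  have hr0 : r ≠ 0 := by
    rintro rfl
    rw [zero_smul, eq_comm, sub_eq_zero] at hr
    exact hXY hr.symm
  rw [lineThrough, lineThrough, AffineSubspace.affineSpan_pair_parallel_iff_vectorSpan_eq,
    vectorSpan_pair, vectorSpan_pair, vsub_eq_sub, vsub_eq_sub, ← neg_sub Y X, ← hr, ← neg_sub W U,
    ← smul_neg, Submodule.span_singleton_smul_eq (isUnit_iff_ne_zero.2 hr0)]

lemma exists_lineForm_lineMap_eq_mul_sub {U W X Y Z : Pt} (hUW : U ≠ W) (hXY : X ≠ Y)
    (hpar : ¬ (lineThrough X Y).Parallel (lineThrough U W))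
    (hZ : Z ∈ lineThrough X Y ∧ Z ∈ lineThrough U W) :
    ∃ κ ≠ 0, ∃ z, lineMap X Y z = Z ∧
      ∀ t, lineForm U W (lineMap X Y t) = κ * (t - z) := by
  obtain ⟨z, rfl⟩ := mem_affineSpan_pair_iff_exists_lineMap_eq.1 hZ.1
  have hz := (lineForm_eq_zero_iff hUW).2 hZ.2
  rw [lineForm_lineMap] at hz
  refine ⟨lineForm U W Y - lineForm U W X,
    sub_ne_zero.2 (lineForm_ne_of_not_parallel hUW hXY hpar).symm, z, rfl, fun t => ?_⟩
  rw [lineForm_lineMap]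
  linear_combination hz

lemma lineForm_eq_affine (U W X : Pt) :
    lineForm U W X = (U 1 - W 1) * X 0 + (W 0 - U 0) * X 1 + (U 0 * W 1 - U 1 * W 0) := by
  simp only [lineForm]
  ring

lemma affine_mul_affine_eq_conicPoly (α β γ α' β' γ' : ℝ) (X : Pt) :
    (α * X 0 + β * X 1 + γ) * (α' * X 0 + β' * X 1 + γ') =
      conicPoly (α * α') (α * β' + β * α') (β * β') (α * γ' + γ * α') (β * γ' + γ * β')
        (γ * γ') X := by
  simp only [conicPoly]
  ring

lemma exists_conicPoly_eq_lineForm_mul_lineForm (P₁ P₂ P₃ P₄ : Pt) :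
    ∃ a b c d e g : ℝ, ∀ X, lineForm P₁ P₂ X * lineForm P₃ P₄ X = conicPoly a b c d e g X :=
  ⟨_, _, _, _, _, _, fun X => by
    rw [lineForm_eq_affine, lineForm_eq_affine, affine_mul_affine_eq_conicPoly]⟩

lemma conicPoly_sub_mul_conicPoly (a b c d e g a' b' c' d' e' g' μ : ℝ) (X : Pt) :
    conicPoly a b c d e g X - μ * conicPoly a' b' c' d' e' g' X =
      conicPoly (a - μ * a') (b - μ * b') (c - μ * c') (d - μ * d') (e - μ * e')
        (g - μ * g') X := by
  simp only [conicPoly]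
  ring

lemma exists_conicPoly_eq_lineForm_mul {a b c d e g : ℝ} {U W : Pt} (hUW : U ≠ W)
    (hU : conicPoly a b c d e g U = 0) (hW : conicPoly a b c d e g W = 0)
    (hmid : conicPoly a b c d e g (midpoint ℝ U W) = 0) :
    ∃ m₀ m₁ m₂ : ℝ, ∀ X, conicPoly a b c d e g X = lineForm U W X * (m₀ * X 0 + m₁ * X 1 + m₂) := by
  set u₀ := W 0 - U 0
  set u₁ := W 1 - U 1
  have hN : u₀ ^ 2 + u₁ ^ 2 ≠ 0 := sq_add_sq_sub_ne_zero hUW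
  simp only [conicPoly, midpoint_apply_coord] at hU hW hmid
  have hquad : a * u₀ ^ 2 + b * (u₀ * u₁) + c * u₁ ^ 2 = 0 := by
    linear_combination 2 * hU + 2 * hW - 4 * hmid
  have hgrad : (2 * a * U 0 + b * U 1 + d) * u₀ + (b * U 0 + 2 * c * U 1 + e) * u₁ = 0 := by
    linear_combination -3 * hU - hW + 4 * hmid
  -- `m₀, m₁` match the quadratic part of the conic with that of `lineForm U W * m`,
  -- and `ν = m(U)` matches the gradient at `U`
  set m₀ := (b * u₀ + (c - a) * u₁) / (u₀ ^ 2 + u₁ ^ 2)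
  set m₁ := ((c - a) * u₀ - b * u₁) / (u₀ ^ 2 + u₁ ^ 2)
  set ν := (-(2 * a * U 0 + b * U 1 + d) * u₁ + (b * U 0 + 2 * c * U 1 + e) * u₀) /
    (u₀ ^ 2 + u₁ ^ 2)
  refine ⟨m₀, m₁, ν - m₀ * U 0 - m₁ * U 1, fun X => ?_⟩
  simp only [conicPoly, lineForm, m₀, m₁, ν]
  field_simp
  linear_combination ((X 0 - U 0) ^ 2 + (X 1 - U 1) ^ 2) * hquad
    + ((X 0 - U 0) * u₀ + (X 1 - U 1) * u₁) * hgrad + (u₀ ^ 2 + u₁ ^ 2) * hU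

lemma exists_affine_eq_mul_lineForm {m₀ m₁ m₂ : ℝ} {D E : Pt} (hDE : D ≠ E)
    (hD : m₀ * D 0 + m₁ * D 1 + m₂ = 0) (hE : m₀ * E 0 + m₁ * E 1 + m₂ = 0) :
    ∃ κ, ∀ X : Pt, m₀ * X 0 + m₁ * X 1 + m₂ = κ * lineForm D E X := by
  set v₀ := E 0 - D 0
  set v₁ := E 1 - D 1
  have hN : v₀ ^ 2 + v₁ ^ 2 ≠ 0 := sq_add_sq_sub_ne_zero hDE
  refine ⟨(m₁ * v₀ - m₀ * v₁) / (v₀ ^ 2 + v₁ ^ 2), fun X => ?_⟩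
  simp only [lineForm]
  field_simp
  linear_combination (v₀ ^ 2 + v₁ ^ 2) * hD + ((X 0 - D 0) * v₀ + (X 1 - D 1) * v₁) * (hE - hD)

theorem exists_conicPoly_eq_pencil {a b c d e g : ℝ} {B C D E : Pt} (hBC : B ≠ C) (hDE : D ≠ E)
    (hDBC : D ∉ lineThrough B C) (hEBC : E ∉ lineThrough B C)
    (hB : conicPoly a b c d e g B = 0) (hC : conicPoly a b c d e g C = 0)
    (hD : conicPoly a b c d e g D = 0) (hE : conicPoly a b c d e g E = 0) :
    ∃ κ μ : ℝ, ∀ X, conicPoly a b c d e g X =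
      κ * (lineForm B C X * lineForm D E X) + μ * (lineForm B E X * lineForm C D X) := by
  have hℓD := mt (lineForm_eq_zero_iff hBC).1 hDBC
  have hℓE := mt (lineForm_eq_zero_iff hBC).1 hEBC
  set F := midpoint ℝ B C
  have hF : lineForm B E F * lineForm C D F ≠ 0 := by
    have hFE : lineForm B E F = -lineForm B C E / 2 := by
      simp only [lineForm, F, midpoint_apply_coord]; ring
    have hFD : lineForm C D F = lineForm B C D / 2 := by
      simp only [lineForm, F, midpoint_apply_coord]; ring
    rw [hFE, hFD]
    exact mul_ne_zero (div_ne_zero (neg_ne_zero.2 hℓE) two_ne_zero) (div_ne_zero hℓD two_ne_zero)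
  set μ := conicPoly a b c d e g F / (lineForm B E F * lineForm C D F)
  obtain ⟨a', b', c', d', e', g', hprod⟩ := exists_conicPoly_eq_lineForm_mul_lineForm B E C D
  have hR (X : Pt) : conicPoly (a - μ * a') (b - μ * b') (c - μ * c') (d - μ * d') (e - μ * e')
      (g - μ * g') X = conicPoly a b c d e g X - μ * (lineForm B E X * lineForm C D X) := by
    rw [hprod, conicPoly_sub_mul_conicPoly]
  obtain ⟨m₀, m₁, m₂, hm⟩ := exists_conicPoly_eq_lineForm_mul hBC
    (by rw [hR, hB, lineForm_self_left, zero_mul, mul_zero, sub_zero])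
    (by rw [hR, hC, lineForm_self_left, mul_zero, mul_zero, sub_zero])
    (by rw [hR, div_mul_cancel₀ _ hF, sub_self])
  have hmD : m₀ * D 0 + m₁ * D 1 + m₂ = 0 := by
    have h := hm D
    rw [hR, hD, lineForm_self_right, mul_zero, mul_zero, sub_zero, eq_comm, mul_eq_zero] at h
    exact h.resolve_left hℓD
  have hmE : m₀ * E 0 + m₁ * E 1 + m₂ = 0 := by
    have h := hm E
    rw [hR, hE, lineForm_self_right, zero_mul, mul_zero, sub_zero, eq_comm, mul_eq_zero] at h
    exact h.resolve_left hℓE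
  obtain ⟨κ, hκ⟩ := exists_affine_eq_mul_lineForm hDE hmD hmE
  refine ⟨κ, μ, fun X => ?_⟩
  have h := hm X
  rw [hR, hκ] at h
  linear_combination h

lemma abc_eq_zero_of_forall_conicPoly_eq_zero {a b c d e g : ℝ}
    (h : ∀ X, conicPoly a b c d e g X = 0) : (a, b, c) = ((0 : ℝ), (0 : ℝ), (0 : ℝ)) := by
  have hval (x y : ℝ) : a * x ^ 2 + b * (x * y) + c * y ^ 2 + d * x + e * y + g = 0 := h !₂[x, y]
  have h00 := hval 0 0
  have h10 := hval 1 0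
  have h20 := hval 2 0
  have h01 := hval 0 1
  have h02 := hval 0 2
  have h11 := hval 1 1
  simp only [Prod.mk.injEq]
  refine ⟨?_, ?_, ?_⟩ <;> linarith

theorem exists_conicPoly_lineMap_eq_pencil {a b c d e g : ℝ} {B C D E X Y I K P Q : Pt}
    (habc : (a, b, c) ≠ ((0 : ℝ), (0 : ℝ), (0 : ℝ)))
    (hB : conicPoly a b c d e g B = 0) (hC : conicPoly a b c d e g C = 0)
    (hD : conicPoly a b c d e g D = 0) (hE : conicPoly a b c d e g E = 0)
    (hBCD : ¬ Collinear ℝ ({B, C, D} : Set Pt)) (hBCE : ¬ Collinear ℝ ({B, C, E} : Set Pt))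
    (hBDE : ¬ Collinear ℝ ({B, D, E} : Set Pt))
    (hXY : X ≠ Y) (hnpar : ∀ s ∈ sides B C D E, ¬ (lineThrough X Y).Parallel s)
    (hI : I ∈ lineThrough X Y ∧ I ∈ lineThrough B C)
    (hK : K ∈ lineThrough X Y ∧ K ∈ lineThrough D E)
    (hP : P ∈ lineThrough X Y ∧ P ∈ lineThrough B E)
    (hQ : Q ∈ lineThrough X Y ∧ Q ∈ lineThrough C D) :
    ∃ A A' i k p q : ℝ, (A ≠ 0 ∨ A' ≠ 0) ∧
      lineMap X Y i = I ∧ lineMap X Y k = K ∧ lineMap X Y p = P ∧ lineMap X Y q = Q ∧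
      ∀ t, conicPoly a b c d e g (lineMap X Y t) =
        A * ((t - i) * (t - k)) + A' * ((t - p) * (t - q)) := by
  have hBC := ne₁₂_of_not_collinear hBCD
  obtain ⟨κ, μ, hpencil⟩ := exists_conicPoly_eq_pencil hBC (ne₂₃_of_not_collinear hBDE)
    (notMem_lineThrough_of_not_collinear hBCD) (notMem_lineThrough_of_not_collinear hBCE)
    hB hC hD hE
  obtain ⟨c₁, hc₁, i, hI, hi⟩ := exists_lineForm_lineMap_eq_mul_sub hBC hXY
    (hnpar _ (by simp [sides])) hI
  obtain ⟨c₂, hc₂, k, hK, hk⟩ := exists_lineForm_lineMap_eq_mul_sub (ne₂₃_of_not_collinear hBDE)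
    hXY (hnpar _ (by simp [sides])) hK
  obtain ⟨c₃, hc₃, p, hP, hp⟩ := exists_lineForm_lineMap_eq_mul_sub (ne₁₃_of_not_collinear hBCE)
    hXY (hnpar _ (by simp [sides])) hP
  obtain ⟨c₄, hc₄, q, hQ, hq⟩ := exists_lineForm_lineMap_eq_mul_sub (ne₂₃_of_not_collinear hBCD)
    hXY (hnpar _ (by simp [sides])) hQ
  refine ⟨κ * (c₁ * c₂), μ * (c₃ * c₄), i, k, p, q, ?_, hI, hK, hP, hQ, fun t => ?_⟩
  · by_contra! h0
    have hκ := (mul_eq_zero.1 h0.1).resolve_right (mul_ne_zero hc₁ hc₂)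
    have hμ := (mul_eq_zero.1 h0.2).resolve_right (mul_ne_zero hc₃ hc₄)
    exact habc (abc_eq_zero_of_forall_conicPoly_eq_zero fun Z => by
      rw [hpencil, hκ, hμ, zero_mul, zero_mul, add_zero])
  · rw [hpencil, hi, hk, hp, hq]
    ring

lemma quadratic_eq_mul_sub_mul_sub {K : Type*} [Field K] {α β γ l m : K} (hlm : l ≠ m)
    (hl : α * l ^ 2 + β * l + γ = 0) (hm : α * m ^ 2 + β * m + γ = 0) (t : K) :
    α * t ^ 2 + β * t + γ = α * ((t - l) * (t - m)) := by
  have hβ : α * (l + m) + β = 0 := by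
    have h : (l - m) * (α * (l + m) + β) = 0 := by linear_combination hl - hm
    exact (mul_eq_zero.1 h).resolve_left (sub_ne_zero.2 hlm)
  linear_combination hl + (t - l) * hβ

theorem pencil_roots_identity {K : Type*} [Field K] {A A' i k p q l m : K} (hlm : l ≠ m)
    (hpi : p ≠ i) (hpk : p ≠ k) (hAA' : A ≠ 0 ∨ A' ≠ 0)
    (hl : A * ((l - i) * (l - k)) + A' * ((l - p) * (l - q)) = 0)
    (hm : A * ((m - i) * (m - k)) + A' * ((m - p) * (m - q)) = 0) :
    (q - l) * (q - m) * ((p - i) * (p - k)) = (p - l) * (p - m) * ((q - i) * (q - k)) := by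
  have hf (t : K) : A * ((t - i) * (t - k)) + A' * ((t - p) * (t - q)) =
      (A + A') * ((t - l) * (t - m)) := by
    have := quadratic_eq_mul_sub_mul_sub (α := A + A') (β := -(A * (i + k) + A' * (p + q)))
      (γ := A * (i * k) + A' * (p * q)) hlm (by linear_combination hl) (by linear_combination hm) t
    linear_combination this
  have hP : A * ((p - i) * (p - k)) = (A + A') * ((p - l) * (p - m)) := by linear_combination hf p
  have hQ : A * ((q - i) * (q - k)) = (A + A') * ((q - l) * (q - m)) := by linear_combination hf q
  rcases eq_or_ne A 0 with rfl | hA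
  · have hA' := hAA'.resolve_left (not_not.2 rfl)
    rw [zero_mul, zero_add, eq_comm, mul_eq_zero] at hP hQ
    rw [hP.resolve_left hA', hQ.resolve_left hA', zero_mul, zero_mul]
  rcases eq_or_ne (A + A') 0 with hS | hS
  · rw [hS, zero_mul, mul_eq_zero, mul_eq_zero, sub_eq_zero, sub_eq_zero] at hP
    rcases hP with h | h | h
    exacts [absurd h hA, absurd h hpi, absurd h hpk]
  apply mul_left_cancel₀ (mul_ne_zero hA hS)
  linear_combination ((A + A') * ((q - l) * (q - m))) * hP - ((A + A') * ((p - l) * (p - m))) * hQ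

theorem dist_lineMap_mul_eq_of_mul_eq {V P : Type*} [NormedAddCommGroup V] [NormedSpace ℝ V]
    [MetricSpace P] [NormedAddTorsor V P] (X Y : P) {i k p q l m : ℝ}
    (h : (q - l) * (q - m) * ((p - i) * (p - k)) = (p - l) * (p - m) * ((q - i) * (q - k))) :
    dist (lineMap X Y q) (lineMap X Y l) * dist (lineMap X Y q) (lineMap X Y m) *
        dist (lineMap X Y p) (lineMap X Y i) * dist (lineMap X Y p) (lineMap X Y k) =
      dist (lineMap X Y p) (lineMap X Y l) * dist (lineMap X Y p) (lineMap X Y m) *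
        dist (lineMap X Y q) (lineMap X Y i) * dist (lineMap X Y q) (lineMap X Y k) := by
  have habs := congrArg (fun x => |x| * dist X Y ^ 4) h
  simp only [abs_mul] at habs
  simp only [dist_lineMap_lineMap, Real.dist_eq]
  linear_combination habs

theorem desargues_involution_conic_general
    (a b c d e g : ℝ) (habc : (a, b, c) ≠ ((0 : ℝ), (0 : ℝ), (0 : ℝ)))
    (𝒞 : Set Pt)
    (h𝒞 : 𝒞 = {X : Pt | a * X 0 ^ 2 + b * (X 0 * X 1) + c * X 1 ^ 2
                  + d * X 0 + e * X 1 + g = 0})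
    (B C D E : Pt)
    (hB : B ∈ 𝒞) (hC : C ∈ 𝒞) (hD : D ∈ 𝒞) (hE : E ∈ 𝒞)
    (hBCD : ¬ Collinear ℝ ({B, C, D} : Set Pt))
    (hBCE : ¬ Collinear ℝ ({B, C, E} : Set Pt))
    (hBDE : ¬ Collinear ℝ ({B, D, E} : Set Pt))
    (Δ : AffineSubspace ℝ Pt) (hΔ : IsLine Δ)
    (hnpar : ∀ s ∈ sides B C D E, ¬ AffineSubspace.Parallel Δ s)
    (havoid : ∀ s₁ ∈ sides B C D E, ∀ s₂ ∈ sides B C D E, s₁ ≠ s₂ →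
      ∀ X : Pt, X ∈ s₁ → X ∈ s₂ → X ∉ Δ)
    (L M : Pt) (hLM : L ≠ M)
    (hL : L ∈ 𝒞 ∧ L ∈ Δ) (hM : M ∈ 𝒞 ∧ M ∈ Δ)
    (I K P Q : Pt)
    (hI : I ∈ Δ ∧ I ∈ lineThrough B C)
    (hK : K ∈ Δ ∧ K ∈ lineThrough D E)
    (hP : P ∈ Δ ∧ P ∈ lineThrough B E)
    (hQ : Q ∈ Δ ∧ Q ∈ lineThrough C D) :
    dist Q L * dist Q M * dist P I * dist P K
      = dist P L * dist P M * dist Q I * dist Q K := by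
  subst h𝒞
  obtain ⟨X, Y, hXY, rfl⟩ := hΔ
  obtain ⟨A, A', i, k, p, q, hAA', rfl, rfl, rfl, rfl, hconic⟩ :=
    exists_conicPoly_lineMap_eq_pencil habc hB hC hD hE hBCD hBCE hBDE hXY hnpar hI hK hP hQ
  obtain ⟨l, rfl⟩ := mem_affineSpan_pair_iff_exists_lineMap_eq.1 hL.2
  obtain ⟨m, rfl⟩ := mem_affineSpan_pair_iff_exists_lineMap_eq.1 hM.2
  have hBE_BC : lineThrough B E ≠ lineThrough B C := fun h =>
    notMem_lineThrough_of_not_collinear hBCE (h ▸ right_mem_affineSpan_pair ℝ B E)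
  have hBE_DE : lineThrough B E ≠ lineThrough D E := fun h =>
    hBDE <| collinear_insert_of_mem_affineSpan_pair
      (show B ∈ lineThrough D E from h ▸ left_mem_affineSpan_pair ℝ B E)
  have hpi : p ≠ i := fun h =>
    havoid _ (by simp [sides]) _ (by simp [sides]) hBE_BC _ hP.2 (by rw [h]; exact hI.2) hP.1
  have hpk : p ≠ k := fun h =>
    havoid _ (by simp [sides]) _ (by simp [sides]) hBE_DE _ hP.2 (by rw [h]; exact hK.2) hP.1
  exact dist_lineMap_mul_eq_of_mul_eq X Y (pencil_roots_identity (fun h => hLM (by rw [h]))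
    hpi hpk hAA' ((hconic l).symm.trans hL.1) ((hconic m).symm.trans hM.1))

/-- Desargues'"'"' involution theorem for a pencil of conics. -/
theorem desargues_involution_conic
    (a b c d e g : ℝ) (habc : (a, b, c) ≠ ((0 : ℝ), (0 : ℝ), (0 : ℝ)))
    (𝒞 : Set Pt)
    (h𝒞 : 𝒞 = {X : Pt | a * X 0 ^ 2 + b * (X 0 * X 1) + c * X 1 ^ 2
                  + d * X 0 + e * X 1 + g = 0})
    (B C D E : Pt)
    (hB : B ∈ 𝒞) (hC : C ∈ 𝒞) (hD : D ∈ 𝒞) (hE : E ∈ 𝒞)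
    (hdist : List.Pairwise (· ≠ ·) [B, C, D, E])
    (hBCD : ¬ Collinear ℝ ({B, C, D} : Set Pt))
    (hBCE : ¬ Collinear ℝ ({B, C, E} : Set Pt))
    (hBDE : ¬ Collinear ℝ ({B, D, E} : Set Pt))
    (hCDE : ¬ Collinear ℝ ({C, D, E} : Set Pt))
    (Δ : AffineSubspace ℝ Pt) (hΔ : IsLine Δ)
    (hnpar : ∀ s ∈ sides B C D E, ¬ AffineSubspace.Parallel Δ s)
    (havoid : ∀ s₁ ∈ sides B C D E, ∀ s₂ ∈ sides B C D E, s₁ ≠ s₂ →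
      ∀ X : Pt, X ∈ s₁ → X ∈ s₂ → X ∉ Δ)
    (L M : Pt) (hLM : L ≠ M)
    (hL : L ∈ 𝒞 ∧ L ∈ Δ) (hM : M ∈ 𝒞 ∧ M ∈ Δ)
    (I K P Q : Pt)
    (hI : I ∈ Δ ∧ I ∈ lineThrough B C)
    (hK : K ∈ Δ ∧ K ∈ lineThrough D E)
    (hP : P ∈ Δ ∧ P ∈ lineThrough B E)
    (hQ : Q ∈ Δ ∧ Q ∈ lineThrough C D) :
    dist Q L * dist Q M * dist P I * dist P K
      = dist P L * dist P M * dist Q I * dist Q K :=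
  desargues_involution_conic_general a b c d e g habc 𝒞 h𝒞 B C D E hB hC hD hE hBCD hBCE hBDE Δ hΔ
    hnpar havoid L M hLM hL hM I K P Q hI hK hP hQ
end
end

section
/- (Pascal's Lemma I for the circle.) Let P, V, N, O, K, Q be six pairwise distinct points on a circle 𝒞 of ℝ², accoupled as the pairs (P,O), (V,K), (N,Q). Suppose the lines PK and VO meet in a point M, the lines NK and VQ meet in a point S, and the lines NO and PQ meet in a point X. Then the three points M, S, X are collinear. -/
noncomputable section

open EuclideanGeometry

/-!
Send the circle to the unit circle of `ℂ` by a similarity. There `z̄ = 1 / z`, so the chord through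
`a` and `b` is the line `z + a b z̄ = a + b`. Hence chords `ab` and `cd` meet at
`z = (a b (c + d) - c d (a + b)) / (a b - c d)`, with `z̄ = (a + b - c - d) / (a b - c d)`, and
`a b ≠ c d` unless the chords share an endpoint. Collinearity of `M, S, X` means that
`(S - M) (X̄ - M̄)` is real, which becomes an identity between rational functions of the six points.
-/

open ComplexConjugate

/-- `(s - m) (x̄ - m̄) = (s̄ - m̄) (x - m)`, where `m, s, x` are the meeting points of the chords
`pk, vo`, `nk, vq` and `no, pq`, written out by the formulas above. -/
theorem pascal_identity {K : Type*} [Field K] {p v n o k q : K} (hM : p * k - v * o ≠ 0)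
    (hS : n * k - v * q ≠ 0) (hX : n * o - p * q ≠ 0) :
    ((n * k * (v + q) - v * q * (n + k)) / (n * k - v * q) -
        (p * k * (v + o) - v * o * (p + k)) / (p * k - v * o)) *
      ((n + o - p - q) / (n * o - p * q) - (p + k - v - o) / (p * k - v * o)) =
    ((n + k - v - q) / (n * k - v * q) - (p + k - v - o) / (p * k - v * o)) *
      ((n * o * (p + q) - p * q * (n + o)) / (n * o - p * q) -
        (p * k * (v + o) - v * o * (p + k)) / (p * k - v * o)) := by
  rw [div_sub_div _ _ hS hM, div_sub_div _ _ hX hM, div_sub_div _ _ hS hM, div_sub_div _ _ hX hM,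
    div_mul_div_comm, div_mul_div_comm, div_left_inj' (by positivity)]
  ring

theorem AffineMap.map_mem_affineSpan_pair {k V₁ P₁ V₂ P₂ : Type*} [Ring k] [AddCommGroup V₁]
    [Module k V₁] [AddTorsor V₁ P₁] [AddCommGroup V₂] [Module k V₂] [AddTorsor V₂ P₂]
    (f : P₁ →ᵃ[k] P₂) {p a b : P₁} (h : p ∈ line[k, a, b]) : f p ∈ line[k, f a, f b] := by
  rw [← Set.image_pair, ← AffineSubspace.map_span]
  exact AffineSubspace.mem_map_of_mem f h

theorem AffineEquiv.collinear_map_triple_iff {k V₁ P₁ V₂ P₂ : Type*} [DivisionRing k]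
    [AddCommGroup V₁] [Module k V₁] [AddTorsor V₁ P₁] [AddCommGroup V₂] [Module k V₂]
    [AddTorsor V₂ P₂] (e : P₁ ≃ᵃ[k] P₂) {a b c : P₁} :
    Collinear k ({e a, e b, e c} : Set P₂) ↔ Collinear k ({a, b, c} : Set P₁) := by
  rw [collinear_iff_not_affineIndependent_set, collinear_iff_not_affineIndependent_set,
    ← e.affineIndependent_iff]
  congr!
  ext i
  fin_cases i <;> rfl

namespace Complex

theorem collinear_of_mul_conj_eq {z₁ z₂ z₃ : ℂ}
    (h : (z₂ - z₁) * conj (z₃ - z₁) = conj (z₂ - z₁) * (z₃ - z₁)) :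
    Collinear ℝ ({z₁, z₂, z₃} : Set ℂ) := by
  rcases eq_or_ne z₃ z₁ with rfl | h₃₁
  · simpa [Set.pair_comm] using collinear_pair ℝ z₂ z₃
  rw [Set.insert_comm]
  apply collinear_insert_of_mem_affineSpan_pair
  have hreal : conj ((z₂ - z₁) / (z₃ - z₁)) = (z₂ - z₁) / (z₃ - z₁) := by
    have h₃₁' : conj (z₃ - z₁) ≠ 0 := (map_ne_zero _).2 (sub_ne_zero.2 h₃₁)
    rw [map_div₀, div_eq_div_iff h₃₁' (sub_ne_zero.2 h₃₁), h]
  refine mem_affineSpan_pair_iff_exists_lineMap_eq.2 ⟨((z₂ - z₁) / (z₃ - z₁)).re, ?_⟩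
  rw [AffineMap.lineMap_apply_module', real_smul, conj_eq_iff_re.1 hreal,
    div_mul_cancel₀ _ (sub_ne_zero.2 h₃₁)]
  ring

variable {a b c d z : ℂ}

theorem mul_conj_eq_one_of_norm_eq_one (ha : ‖a‖ = 1) : a * conj a = 1 := by
  rw [mul_conj, normSq_eq_norm_sq, ha]; norm_num

theorem add_mul_mul_conj_eq_of_mem_chord (ha : ‖a‖ = 1) (hb : ‖b‖ = 1)
    (hz : z ∈ line[ℝ, a, b]) : z + a * b * conj z = a + b := by
  obtain ⟨t, rfl⟩ := mem_affineSpan_pair_iff_exists_lineMap_eq.1 hz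
  simp only [AffineMap.lineMap_apply_module, real_smul, map_add, map_mul, conj_ofReal, ofReal_sub,
    ofReal_one, map_sub, map_one]
  linear_combination (1 - t) * b * mul_conj_eq_one_of_norm_eq_one ha +
    t * a * mul_conj_eq_one_of_norm_eq_one hb

theorem mul_sub_mul_ne_zero_of_mem_chords (ha : ‖a‖ = 1) (hb : ‖b‖ = 1) (hc : ‖c‖ = 1)
    (hd : ‖d‖ = 1) (hca : c ≠ a) (hcb : c ≠ b) (hab : z ∈ line[ℝ, a, b])
    (hcd : z ∈ line[ℝ, c, d]) : a * b - c * d ≠ 0 := by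
  intro h
  have hsum : a + b = c + d := by
    rw [← add_mul_mul_conj_eq_of_mem_chord ha hb hab, ← add_mul_mul_conj_eq_of_mem_chord hc hd hcd,
      sub_eq_zero.1 h]
  -- `c` would be a root of `(X - a) (X - b) = (X - c) (X - d)`
  have : (c - a) * (c - b) = 0 := by linear_combination h - c * hsum
  rcases mul_eq_zero.1 this with h | h
  exacts [hca (sub_eq_zero.1 h), hcb (sub_eq_zero.1 h)]

theorem eq_and_conj_eq_of_mem_chords (ha : ‖a‖ = 1) (hb : ‖b‖ = 1) (hc : ‖c‖ = 1)
    (hd : ‖d‖ = 1) (hne : a * b - c * d ≠ 0) (hab : z ∈ line[ℝ, a, b])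
    (hcd : z ∈ line[ℝ, c, d]) :
    z = (a * b * (c + d) - c * d * (a + b)) / (a * b - c * d) ∧
      conj z = (a + b - c - d) / (a * b - c * d) := by
  have h₁ := add_mul_mul_conj_eq_of_mem_chord ha hb hab
  have h₂ := add_mul_mul_conj_eq_of_mem_chord hc hd hcd
  constructor <;> rw [eq_div_iff hne]
  · linear_combination a * b * h₂ - c * d * h₁
  · linear_combination h₁ - h₂

theorem collinear_of_inscribed_hexagon {p v n o k q m s x : ℂ}
    (hp : ‖p‖ = 1) (hv : ‖v‖ = 1) (hn : ‖n‖ = 1) (ho : ‖o‖ = 1) (hk : ‖k‖ = 1) (hq : ‖q‖ = 1)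
    (hpv : p ≠ v) (hpn : p ≠ n) (hpo : p ≠ o) (hvn : v ≠ n) (hvk : v ≠ k)
    (hm₁ : m ∈ line[ℝ, p, k]) (hm₂ : m ∈ line[ℝ, v, o])
    (hs₁ : s ∈ line[ℝ, n, k]) (hs₂ : s ∈ line[ℝ, v, q])
    (hx₁ : x ∈ line[ℝ, n, o]) (hx₂ : x ∈ line[ℝ, p, q]) :
    Collinear ℝ ({m, s, x} : Set ℂ) := by
  have hM := mul_sub_mul_ne_zero_of_mem_chords hp hk hv ho hpv.symm hvk hm₁ hm₂
  have hS := mul_sub_mul_ne_zero_of_mem_chords hn hk hv hq hvn hvk hs₁ hs₂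
  have hX := mul_sub_mul_ne_zero_of_mem_chords hn ho hp hq hpn hpo hx₁ hx₂
  obtain ⟨rfl, hm⟩ := eq_and_conj_eq_of_mem_chords hp hk hv ho hM hm₁ hm₂
  obtain ⟨rfl, hs⟩ := eq_and_conj_eq_of_mem_chords hn hk hv hq hS hs₁ hs₂
  obtain ⟨rfl, hx⟩ := eq_and_conj_eq_of_mem_chords hn ho hp hq hX hx₁ hx₂
  apply collinear_of_mul_conj_eq
  rw [map_sub, map_sub, hm, hs, hx]
  exact pascal_identity hM hS hX

end Complex

def normalizeCircle (c : Pt) {ρ : ℝ} (hρ : 0 < ρ) : Pt ≃ᵃ[ℝ] ℂ :=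
  ((AffineEquiv.vaddConst ℝ c).symm.trans
    Complex.orthonormalBasisOneI.repr.symm.toLinearEquiv.toAffineEquiv).trans
    (LinearEquiv.smulOfNeZero ℝ ℂ ρ⁻¹ (inv_ne_zero hρ.ne')).toAffineEquiv

theorem norm_normalizeCircle {c P : Pt} {ρ : ℝ} (hρ : 0 < ρ) (hP : P ∈ Metric.sphere c ρ) :
    ‖normalizeCircle c hρ P‖ = 1 := by
  change ‖ρ⁻¹ • Complex.orthonormalBasisOneI.repr.symm (P -ᵥ c)‖ = 1
  rw [norm_smul, LinearIsometryEquiv.norm_map, vsub_eq_sub, mem_sphere_iff_norm.1 hP, norm_inv,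
    Real.norm_of_nonneg hρ.le, inv_mul_cancel₀ hρ.ne']

/-- Pascal'"'"'s Lemma I for the circle: M, S, X are collinear. -/
theorem pascal_lemma_I
    (O₀ : Pt) (ρ : ℝ) (hρ : 0 < ρ)
    (P V N O K Q : Pt)
    (hP : P ∈ Metric.sphere O₀ ρ) (hV : V ∈ Metric.sphere O₀ ρ)
    (hN : N ∈ Metric.sphere O₀ ρ) (hO : O ∈ Metric.sphere O₀ ρ)
    (hK : K ∈ Metric.sphere O₀ ρ) (hQ : Q ∈ Metric.sphere O₀ ρ)
    (hdist : List.Pairwise (· ≠ ·) [P, V, N, O, K, Q])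
    (M S X : Pt)
    (hM₁ : M ∈ lineThrough P K) (hM₂ : M ∈ lineThrough V O)
    (hS₁ : S ∈ lineThrough N K) (hS₂ : S ∈ lineThrough V Q)
    (hX₁ : X ∈ lineThrough N O) (hX₂ : X ∈ lineThrough P Q) :
    Collinear ℝ ({M, S, X} : Set Pt) := by
  simp only [List.pairwise_cons, List.mem_cons, forall_eq_or_imp] at hdist
  obtain ⟨⟨hPV, hPN, hPO, -⟩, ⟨hVN, -, hVK, -⟩, -⟩ := hdist
  let e := normalizeCircle O₀ hρ
  have hline {p a b : Pt} (h : p ∈ lineThrough a b) : e p ∈ line[ℝ, e a, e b] :=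
    e.toAffineMap.map_mem_affineSpan_pair h
  exact e.collinear_map_triple_iff.1 <| Complex.collinear_of_inscribed_hexagon
    (norm_normalizeCircle hρ hP) (norm_normalizeCircle hρ hV) (norm_normalizeCircle hρ hN)
    (norm_normalizeCircle hρ hO) (norm_normalizeCircle hρ hK) (norm_normalizeCircle hρ hQ)
    (e.injective.ne hPV) (e.injective.ne hPN) (e.injective.ne hPO) (e.injective.ne hVN)
    (e.injective.ne hVK) (hline hM₁) (hline hM₂) (hline hS₁) (hline hS₂) (hline hX₁) (hline hX₂)
end
end

section
/- (Key cross-ratio identity in the proof of Pascal's Lemma I.) Let P, V, N, O, K, Q be six pairwise distinct points on a circle 𝒞 of ℝ². Suppose the lines PK and VO meet in a point M, the lines NK and VQ meet in a point S, the lines PK and VQ meet in a point A, the lines NO and PK meet in a point α, and the lines NO and VQ meet in a point β. Then AM·αP·βS·AQ = αM·AP·AS·βQ; that is, the ratio AM/αM composed with αP/AP equals the ratio AS/βS composed with βQ/AQ. -/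
noncomputable section

open EuclideanGeometry

/-!
The chords `PK`, `VQ`, `NO` bound the triangle `A α β`. Menelaus' theorem for its transversals
`V O M` and `N K S`, multiplied together, is turned into the claim by the power of the point at
the three vertices: `AP · AK = AV · AQ`, `αP · αK = αN · αO`, `βN · βO = βV · βQ`. The lengths
`αO, βV, AK, αN` cancelled on the way are nonzero because no vertex lies on the circle. If the
chords are concurrent the triangle is a single point and both sides agree trivially.
-/

open AffineMap

section Menelaus

variable {E : Type*} [NormedAddCommGroup E] [NormedSpace ℝ E]

theorem eq_zero_and_eq_zero_of_not_collinear {a b c : E} (h : ¬ Collinear ℝ {a, b, c})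
    {x y : ℝ} (hxy : x • (b - a) + y • (c - a) = 0) : x = 0 ∧ y = 0 := by
  by_contra hne
  apply h
  by_cases hy : y = 0
  · have hx : x ≠ 0 := fun hx => hne ⟨hx, hy⟩
    rw [hy, zero_smul, add_zero, smul_eq_zero, sub_eq_zero] at hxy
    rw [hxy.resolve_left hx, Set.insert_eq_of_mem (Set.mem_insert _ _)]
    exact collinear_pair ℝ a c
  · have hca : c - a = (-x / y) • (b - a) := by
      apply smul_right_injective E hy
      dsimp only
      rw [smul_smul, mul_div_cancel₀ _ hy]
      linear_combination (norm := module) hxy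
    have hc : c ∈ line[ℝ, a, b] := mem_affineSpan_pair_iff_exists_lineMap_eq.mpr
      ⟨-x / y, by rw [lineMap_apply_module', ← hca, sub_add_cancel]⟩
    rw [Set.pair_comm, Set.insert_comm]
    exact collinear_insert_of_mem_affineSpan_pair hc

theorem mul_dist_eq_mul_dist_of_menelaus {a b c d e f : E} (habc : ¬ Collinear ℝ {a, b, c})
    (hf : Collinear ℝ {a, b, f}) (hd : Collinear ℝ {b, c, d}) (he : Collinear ℝ {c, a, e})
    (hdef : f ∈ line[ℝ, e, d]) :
    dist a f * dist b d * dist c e = dist f b * dist d c * dist e a := by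
  have lineMap_of_collinear : ∀ {p q r s : E}, ¬ Collinear ℝ {p, q, r} → Collinear ℝ {p, q, s} →
      ∃ x : ℝ, lineMap p q x = s := fun {p q r s} hpqr hpqs => by
    refine mem_affineSpan_pair_iff_exists_lineMap_eq.mp <|
      hpqs.mem_affineSpan_of_mem_of_ne (by simp) (by simp) (by simp) fun hpq => hpqr ?_
    rw [hpq, Set.insert_eq_of_mem (Set.mem_insert _ _)]
    exact collinear_pair ℝ q r
  obtain ⟨x, rfl⟩ := lineMap_of_collinear habc hf
  obtain ⟨y, rfl⟩ := lineMap_of_collinear (r := a) (by rwa [Set.pair_comm, Set.insert_comm]) hd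
  obtain ⟨z, rfl⟩ := lineMap_of_collinear (r := b) (by rwa [Set.insert_comm, Set.pair_comm]) he
  obtain ⟨t, ht⟩ := mem_affineSpan_pair_iff_exists_lineMap_eq.mp hdef
  have hcoord : (t * (1 - y) - x) • (b - a) + ((1 - t) * (1 - z) + t * y) • (c - a) = 0 := by
    simp only [lineMap_apply_module] at ht
    linear_combination (norm := module) ht
  obtain ⟨hx, hyz⟩ := eq_zero_and_eq_zero_of_not_collinear habc hcoord
  have hsigned : x * y * z = -((1 - x) * (1 - y) * (1 - z)) := by
    linear_combination (1 - y) * hyz - (y * z - (1 - y) * (1 - z)) * hx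
  rw [dist_comm a, dist_comm b, dist_comm c, dist_lineMap_left, dist_lineMap_left,
    dist_lineMap_left, dist_lineMap_right, dist_lineMap_right, dist_lineMap_right]
  have habs : ‖x‖ * ‖y‖ * ‖z‖ = ‖1 - x‖ * ‖1 - y‖ * ‖1 - z‖ := by
    simp only [← norm_mul, hsigned, norm_neg]
  linear_combination (dist a b * dist b c * dist c a) * habs

end Menelaus

namespace EuclideanGeometry.Cospherical

variable {V P : Type*} [NormedAddCommGroup V] [InnerProductSpace ℝ V] [MetricSpace P]
  [NormedAddTorsor V P] {s : Set P}

theorem eq_or_eq_of_mem_affineSpan_pair (hs : Cospherical s) {a b x : P} (ha : a ∈ s)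
    (hb : b ∈ s) (hx : x ∈ s) (hab : a ≠ b) (hxab : x ∈ line[ℝ, a, b]) : x = a ∨ x = b := by
  by_contra! hne
  refine affineIndependent_iff_not_collinear_set.mp
    (hs.affineIndependent_of_mem_of_ne ha hb hx hab hne.1.symm hne.2.symm) ?_
  rw [Set.pair_comm, Set.insert_comm]
  exact collinear_insert_of_mem_affineSpan_pair hxab

theorem ne_of_mem_affineSpan_pair (hs : Cospherical s) {a b c x : P} (ha : a ∈ s)
    (hb : b ∈ s) (hc : c ∈ s) (hab : a ≠ b) (hca : c ≠ a) (hcb : c ≠ b)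
    (hx : x ∈ line[ℝ, a, b]) : x ≠ c := by
  rintro rfl
  exact (hs.eq_or_eq_of_mem_affineSpan_pair ha hb hc hab hx).elim hca hcb

theorem eq_of_mem_affineSpan_pair_of_mem_affineSpan_pair (hs : Cospherical s) {a b c d x y : P}
    (ha : a ∈ s) (hb : b ∈ s) (hc : c ∈ s) (hab : a ≠ b) (hca : c ≠ a) (hcb : c ≠ b)
    (hx₁ : x ∈ line[ℝ, a, b]) (hx₂ : x ∈ line[ℝ, c, d])
    (hy₁ : y ∈ line[ℝ, a, b]) (hy₂ : y ∈ line[ℝ, c, d]) : x = y := by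
  by_contra hxy
  have hcxy : c ∈ line[ℝ, x, y] :=
    (collinear_triple_of_mem_affineSpan_pair hx₂ hy₂ (left_mem_affineSpan_pair ℝ c d))
      |>.mem_affineSpan_of_mem_of_ne (by simp) (by simp) (by simp) hxy
  exact hs.ne_of_mem_affineSpan_pair ha hb hc hab hca hcb
    (affineSpan_pair_le_of_mem_of_mem hx₁ hy₁ hcxy) rfl

theorem eq_and_eq_of_collinear_of_mem_chords (hs : Cospherical s) {a b c d e f x y w : P}
    (ha : a ∈ s) (hb : b ∈ s) (hc : c ∈ s) (hd : d ∈ s) (he : e ∈ s)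
    (hab : a ≠ b) (hcd : c ≠ d) (hca : c ≠ a) (hcb : c ≠ b)
    (hea : e ≠ a) (heb : e ≠ b) (hec : e ≠ c) (hed : e ≠ d)
    (hx₁ : x ∈ line[ℝ, a, b]) (hx₂ : x ∈ line[ℝ, c, d])
    (hy₁ : y ∈ line[ℝ, a, b]) (hy₂ : y ∈ line[ℝ, e, f])
    (hw₁ : w ∈ line[ℝ, c, d]) (hw₂ : w ∈ line[ℝ, e, f])
    (hcol : Collinear ℝ {x, y, w}) : y = x ∧ w = x := by
  by_cases hxy : x = y
  · subst hxy
    exact ⟨rfl, hs.eq_of_mem_affineSpan_pair_of_mem_affineSpan_pair hc hd he hcd hec hed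
      hw₁ hw₂ hx₂ hy₂⟩
  · have hw : w ∈ line[ℝ, a, b] := affineSpan_pair_le_of_mem_of_mem hx₁ hy₁ <|
      hcol.mem_affineSpan_of_mem_of_ne (by simp) (by simp) (by simp) hxy
    have hwx := hs.eq_of_mem_affineSpan_pair_of_mem_affineSpan_pair ha hb hc hab hca hcb
      hw hw₁ hx₁ hx₂
    have hwy := hs.eq_of_mem_affineSpan_pair_of_mem_affineSpan_pair ha hb he hab hea heb
      hw hw₂ hy₁ hy₂
    exact absurd (hwx.symm.trans hwy) hxy

end EuclideanGeometry.Cospherical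

theorem pascal_cross_ratio_identity_general
    (O₀ : Pt) (ρ : ℝ)
    (P V N O K Q : Pt)
    (hP : P ∈ Metric.sphere O₀ ρ) (hV : V ∈ Metric.sphere O₀ ρ)
    (hN : N ∈ Metric.sphere O₀ ρ) (hO : O ∈ Metric.sphere O₀ ρ)
    (hK : K ∈ Metric.sphere O₀ ρ) (hQ : Q ∈ Metric.sphere O₀ ρ)
    (hdist : List.Pairwise (· ≠ ·) [P, V, N, O, K, Q])
    (M S A α β : Pt)
    (hM₁ : M ∈ lineThrough P K) (hM₂ : M ∈ lineThrough V O)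
    (hS₁ : S ∈ lineThrough N K) (hS₂ : S ∈ lineThrough V Q)
    (hA₁ : A ∈ lineThrough P K) (hA₂ : A ∈ lineThrough V Q)
    (hα₁ : α ∈ lineThrough N O) (hα₂ : α ∈ lineThrough P K)
    (hβ₁ : β ∈ lineThrough N O) (hβ₂ : β ∈ lineThrough V Q) :
    dist A M * dist α P * dist β S * dist A Q
      = dist α M * dist A P * dist A S * dist β Q := by
  simp only [List.pairwise_cons, List.mem_cons, List.not_mem_nil, or_false, forall_eq_or_imp,
    forall_eq, List.Pairwise.nil, and_true] at hdist
  obtain ⟨⟨hPV, hPN, hPO, hPK, hPQ⟩, ⟨hVN, hVO, hVK, hVQ⟩, ⟨hNO, hNK, hNQ⟩, ⟨hOK, hOQ⟩, hKQ, -⟩ :=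
    hdist
  have hs : Cospherical (Metric.sphere O₀ ρ) := ⟨O₀, ρ, fun _ => id⟩
  by_cases hcol : Collinear ℝ {A, α, β}
  · obtain ⟨rfl, rfl⟩ := hs.eq_and_eq_of_collinear_of_mem_chords hP hK hV hQ hN hPK hVQ hPV.symm
      hVK hPN.symm hNK hVN.symm hNQ hA₁ hA₂ hα₂ hα₁ hβ₂ hβ₁ hcol
    rfl
  have hmen₁ := mul_dist_eq_mul_dist_of_menelaus hcol
    (collinear_triple_of_mem_affineSpan_pair hA₁ hα₂ hM₁)
    (collinear_triple_of_mem_affineSpan_pair hα₁ hβ₁ (right_mem_affineSpan_pair ℝ N O))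
    (collinear_triple_of_mem_affineSpan_pair hβ₂ hA₂ (left_mem_affineSpan_pair ℝ V Q)) hM₂
  have hmen₂ := mul_dist_eq_mul_dist_of_menelaus (by rwa [Set.insert_comm, Set.pair_comm])
    (collinear_triple_of_mem_affineSpan_pair hβ₂ hA₂ hS₂)
    (collinear_triple_of_mem_affineSpan_pair hA₁ hα₂ (right_mem_affineSpan_pair ℝ P K))
    (collinear_triple_of_mem_affineSpan_pair hα₁ hβ₁ (left_mem_affineSpan_pair ℝ N O)) hS₁
  have hpowA := mul_dist_eq_mul_dist_of_cospherical
    (hs.subset <| Set.insert_subset hP <| Set.insert_subset hK <| Set.pair_subset hV hQ) hA₁ hA₂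
  have hpowα := mul_dist_eq_mul_dist_of_cospherical
    (hs.subset <| Set.insert_subset hP <| Set.insert_subset hK <| Set.pair_subset hN hO) hα₂ hα₁
  have hpowβ := mul_dist_eq_mul_dist_of_cospherical
    (hs.subset <| Set.insert_subset hN <| Set.insert_subset hO <| Set.pair_subset hV hQ) hβ₁ hβ₂
  have hαO := dist_ne_zero.mpr (hs.ne_of_mem_affineSpan_pair hP hK hO hPK hPO.symm hOK hα₂)
  have hβV := dist_ne_zero.mpr (hs.ne_of_mem_affineSpan_pair hN hO hV hNO hVN hVO hβ₁)
  have hAK := dist_ne_zero.mpr (hs.ne_of_mem_affineSpan_pair hV hQ hK hVQ hVK.symm hKQ hA₂)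
  have hαN := dist_ne_zero.mpr (hs.ne_of_mem_affineSpan_pair hP hK hN hPK hPN.symm hNK hα₂)
  simp only [dist_comm P, dist_comm K, dist_comm V, dist_comm Q, dist_comm N, dist_comm O,
    dist_comm M, dist_comm S] at hmen₁ hmen₂ hpowA hpowα hpowβ
  refine mul_right_cancel₀ (mul_ne_zero (mul_ne_zero (mul_ne_zero hαO hβV) hAK) hαN) ?_
  calc dist A M * dist α P * dist β S * dist A Q * (dist α O * dist β V * dist A K * dist α N)
      = (dist A M * dist α O * dist β V) * (dist β S * dist A K * dist α N)
          * dist α P * dist A Q := by ring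
    _ = (dist α M * dist β O * dist A V) * (dist A S * dist α K * dist β N)
          * dist α P * dist A Q := by rw [hmen₁, hmen₂]
    _ = dist α M * dist A S * (dist α P * dist α K) * (dist β N * dist β O)
          * (dist A V * dist A Q) := by ring
    _ = dist α M * dist A S * (dist α N * dist α O) * (dist β V * dist β Q)
          * (dist A P * dist A K) := by rw [hpowα, hpowβ, hpowA]
    _ = dist α M * dist A P * dist A S * dist β Q * (dist α O * dist β V * dist A K * dist α N) := by
          ring

/-- The key cross-ratio identity in the proof of Pascal'"'"'s Lemma I. -/
theorem pascal_cross_ratio_identity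
    (O₀ : Pt) (ρ : ℝ) (hρ : 0 < ρ)
    (P V N O K Q : Pt)
    (hP : P ∈ Metric.sphere O₀ ρ) (hV : V ∈ Metric.sphere O₀ ρ)
    (hN : N ∈ Metric.sphere O₀ ρ) (hO : O ∈ Metric.sphere O₀ ρ)
    (hK : K ∈ Metric.sphere O₀ ρ) (hQ : Q ∈ Metric.sphere O₀ ρ)
    (hdist : List.Pairwise (· ≠ ·) [P, V, N, O, K, Q])
    (M S A α β : Pt)
    (hM₁ : M ∈ lineThrough P K) (hM₂ : M ∈ lineThrough V O)
    (hS₁ : S ∈ lineThrough N K) (hS₂ : S ∈ lineThrough V Q)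
    (hA₁ : A ∈ lineThrough P K) (hA₂ : A ∈ lineThrough V Q)
    (hα₁ : α ∈ lineThrough N O) (hα₂ : α ∈ lineThrough P K)
    (hβ₁ : β ∈ lineThrough N O) (hβ₂ : β ∈ lineThrough V Q) :
    dist A M * dist α P * dist β S * dist A Q
      = dist α M * dist A P * dist A S * dist β Q :=
  pascal_cross_ratio_identity_general O₀ ρ P V N O K Q hP hV hN hO hK hQ hdist M S A α β hM₁ hM₂ hS₁
    hS₂ hA₁ hA₂ hα₁ hα₂ hβ₁ hβ₂
end
end

section
/- (Pappus, Collection VII.142.) Let ℓ₁ and ℓ₂ be two distinct lines of ℝ² meeting in a point A. Let α, M, P be pairwise distinct points of ℓ₁, each distinct from A, and let β, S, Q be pairwise distinct points of ℓ₂, each distinct from A. Suppose the signed cross-ratios agree: (MA/Mα)·(Pα/PA) = (SA/Sβ)·(Qβ/QA), where each quotient is a signed ratio along the corresponding line. If the lines αβ and PQ meet in a point X, then X lies on the line MS. -/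
noncomputable section

open EuclideanGeometry

lemma line_eq_of_mem {s : AffineSubspace ℝ Pt} (h : IsLine s) {B C : Pt}
    (hB : B ∈ s) (hC : C ∈ s) (hBC : B ≠ C) : s = lineThrough B C := by
  obtain ⟨x, y, hxy, rfl⟩ := h
  have hdir : (lineThrough x y).direction = ℝ ∙ (y -ᵥ x) := by
    unfold lineThrough
    rw [direction_affineSpan, vectorSpan_pair_rev]
  have hmem : C -ᵥ B ∈ (lineThrough x y).direction :=
    AffineSubspace.vsub_mem_direction hC hB
  rw [hdir, Submodule.mem_span_singleton] at hmem
  obtain ⟨r, hr⟩ := hmem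
  have hr0 : r ≠ 0 := by
    rintro rfl
    rw [zero_smul] at hr
    exact hBC ((vsub_eq_zero_iff_eq.mp hr.symm)).symm
  symm
  unfold lineThrough at *
  rw [AffineSubspace.eq_iff_direction_eq_of_mem
    (left_mem_affineSpan_pair ℝ B C) hB, hdir]
  rw [direction_affineSpan, vectorSpan_pair_rev, ← hr,
    Submodule.span_singleton_smul_eq (isUnit_iff_ne_zero.mpr hr0)]

lemma coord_of_mem {B C Y : Pt} (hY : Y ∈ lineThrough B C) :
    ∃ r : ℝ, Y - B = r • (C - B) := by
  have h' : (Y -ᵥ B) +ᵥ B ∈ lineThrough B C := by rwa [vsub_vadd]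
  unfold lineThrough at h'
  rw [vadd_left_mem_affineSpan_pair] at h'
  obtain ⟨r, hr⟩ := h'
  rw [vsub_eq_sub, vsub_eq_sub] at hr
  exact ⟨r, hr.symm⟩

/-- Pappus, Collection VII.142: equal cross-ratios on two lines through A imply
that αβ, PQ and MS are concurrent. -/
theorem pappus_vii_142
    (ℓ₁ ℓ₂ : AffineSubspace ℝ Pt) (h₁ : IsLine ℓ₁) (h₂ : IsLine ℓ₂)
    (hne : ℓ₁ ≠ ℓ₂)
    (A : Pt) (hA₁ : A ∈ ℓ₁) (hA₂ : A ∈ ℓ₂)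
    (α M P : Pt)
    (hα : α ∈ ℓ₁) (hM : M ∈ ℓ₁) (hP : P ∈ ℓ₁)
    (hαM : α ≠ M) (hαP : α ≠ P) (hMP : M ≠ P)
    (hαA : α ≠ A) (hMA : M ≠ A) (hPA : P ≠ A)
    (β S Q : Pt)
    (hβ : β ∈ ℓ₂) (hS : S ∈ ℓ₂) (hQ : Q ∈ ℓ₂)
    (hβS : β ≠ S) (hβQ : β ≠ Q) (hSQ : S ≠ Q)
    (hβA : β ≠ A) (hSA : S ≠ A) (hQA : Q ≠ A)
    (r₁ r₂ r₃ r₄ : ℝ)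
    (hr₁ : A - M = r₁ • (α - M))
    (hr₂ : α - P = r₂ • (A - P))
    (hr₃ : A - S = r₃ • (β - S))
    (hr₄ : β - Q = r₄ • (A - Q))
    (hcr : r₁ * r₂ = r₃ * r₄)
    (X : Pt) (hX₁ : X ∈ lineThrough α β) (hX₂ : X ∈ lineThrough P Q) :
    X ∈ lineThrough M S := by
  have hl1 : ℓ₁ = lineThrough A α := line_eq_of_mem h₁ hA₁ hα (Ne.symm hαA)
  have hl2 : ℓ₂ = lineThrough A β := line_eq_of_mem h₂ hA₂ hβ (Ne.symm hβA)
  have hU0 : α - A ≠ 0 := sub_ne_zero.mpr hαA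
  have hV0 : β - A ≠ 0 := sub_ne_zero.mpr hβA
  obtain ⟨m, hm⟩ := coord_of_mem (hl1 ▸ hM)
  obtain ⟨p, hp⟩ := coord_of_mem (hl1 ▸ hP)
  obtain ⟨c, hc⟩ := coord_of_mem (hl2 ▸ hS)
  obtain ⟨d, hd⟩ := coord_of_mem (hl2 ▸ hQ)
  obtain ⟨t, ht⟩ := coord_of_mem hX₁
  obtain ⟨w, hw⟩ := coord_of_mem hX₂
  -- nonzero / non-one facts
  have hm0 : m ≠ 0 := by
    rintro rfl; rw [zero_smul] at hm; exact hMA (sub_eq_zero.mp hm)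
  have hm1 : m ≠ 1 := by
    rintro rfl; rw [one_smul] at hm; exact hαM (sub_left_inj.mp hm).symm
  have hp0 : p ≠ 0 := by
    rintro rfl; rw [zero_smul] at hp; exact hPA (sub_eq_zero.mp hp)
  have hp1 : p ≠ 1 := by
    rintro rfl; rw [one_smul] at hp; exact hαP (sub_left_inj.mp hp).symm
  have hc0 : c ≠ 0 := by
    rintro rfl; rw [zero_smul] at hc; exact hSA (sub_eq_zero.mp hc)
  have hc1 : c ≠ 1 := by
    rintro rfl; rw [one_smul] at hc; exact hβS (sub_left_inj.mp hc).symm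
  have hd0 : d ≠ 0 := by
    rintro rfl; rw [zero_smul] at hd; exact hQA (sub_eq_zero.mp hd)
  -- linear independence of α - A and β - A
  have hind : ∀ a b : ℝ, a • (α - A) + b • (β - A) = 0 → a = 0 ∧ b = 0 := by
    intro a b hab
    by_cases hb : b = 0
    · refine ⟨?_, hb⟩
      rw [hb, zero_smul, add_zero, smul_eq_zero] at hab
      exact hab.resolve_right hU0
    · exfalso
      have h1 : b • (β - A) = (-a) • (α - A) := by
        rw [neg_smul]; exact eq_neg_of_add_eq_zero_right hab
      have hk : β - A = (b⁻¹ * -a) • (α - A) := by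
        rw [mul_smul, ← h1, inv_smul_smul₀ hb]
      have hk0 : b⁻¹ * -a ≠ 0 := by
        rintro h0; rw [h0, zero_smul] at hk; exact hV0 hk
      have hUdir : (α - A) ∈ ℓ₁.direction := by
        have := AffineSubspace.vsub_mem_direction hα hA₁
        rwa [vsub_eq_sub] at this
      have hVdir : (β - A) ∈ ℓ₂.direction := by
        have := AffineSubspace.vsub_mem_direction hβ hA₂
        rwa [vsub_eq_sub] at this
      have hβ1 : β ∈ ℓ₁ := by
        have : (β -ᵥ A) +ᵥ A ∈ ℓ₁ := by
          refine AffineSubspace.vadd_mem_of_mem_direction ?_ hA₁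
          rw [vsub_eq_sub, hk]
          exact Submodule.smul_mem _ _ hUdir
        rwa [vsub_vadd] at this
      have hα2 : α ∈ ℓ₂ := by
        have hk' : α - A = (b⁻¹ * -a)⁻¹ • (β - A) := by
          rw [hk, inv_smul_smul₀ hk0]
        have : (α -ᵥ A) +ᵥ A ∈ ℓ₂ := by
          refine AffineSubspace.vadd_mem_of_mem_direction ?_ hA₂
          rw [vsub_eq_sub, hk']
          exact Submodule.smul_mem _ _ hVdir
        rwa [vsub_vadd] at this
      refine hne (le_antisymm ?_ ?_)
      · rw [hl1]
        exact affineSpan_pair_le_of_mem_of_mem hA₂ hα2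
      · rw [hl2]
        exact affineSpan_pair_le_of_mem_of_mem hA₁ hβ1
  -- scalar equations from the cross-ratio hypotheses
  have e1 : (-m : ℝ) = r₁ * (1 - m) := by
    refine smul_left_injective ℝ hU0 ?_
    linear_combination (norm := module) hr₁ + (1 - r₁) • hm
  have e2 : (1 - p : ℝ) = r₂ * (-p) := by
    refine smul_left_injective ℝ hU0 ?_
    linear_combination (norm := module) hr₂ + (1 - r₂) • hp
  have e3 : (-c : ℝ) = r₃ * (1 - c) := by
    refine smul_left_injective ℝ hV0 ?_
    linear_combination (norm := module) hr₃ + (1 - r₃) • hc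
  have e4 : (1 - d : ℝ) = r₄ * (-d) := by
    refine smul_left_injective ℝ hV0 ?_
    linear_combination (norm := module) hr₄ + (1 - r₄) • hd
  -- scalar equations from X being on both lines
  have hsum : ((1 - t) - (p - w * p)) • (α - A) + (t - w * d) • (β - A) = 0 := by
    linear_combination (norm := module) hw - ht + (1 - w) • hp + w • hd
  obtain ⟨g1, g2⟩ := hind _ _ hsum
  have f1 : 1 - t = p - w * p := by linarith
  have f2 : t = w * d := by linarith
  -- algebra
  have g3 : m * (p - 1) = -(r₁ * r₂) * ((1 - m) * p) := by
    linear_combination (-(p - 1)) * e1 + (r₁ * (1 - m)) * e2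
  have g4 : c * (d - 1) = -(r₃ * r₄) * ((1 - c) * d) := by
    linear_combination (-(d - 1)) * e3 + (r₃ * (1 - c)) * e4
  have h5 : m * (p - 1) * ((1 - c) * d) = c * (d - 1) * ((1 - m) * p) := by
    linear_combination ((1 - c) * d) * g3 - ((1 - m) * p) * g4 -
      ((1 - m) * p * (1 - c) * d) * hcr
  have f3 : t * (p - d) = d * (p - 1) := by linear_combination d * f1 + p * f2
  have hpd : p ≠ d := by
    rintro rfl
    rw [sub_self, mul_zero] at f3
    rcases mul_eq_zero.mp f3.symm with h | h
    · exact hd0 h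
    · exact hp1 (by linarith)
  have key2 : (p - d) * (c * (1 - m) - t * (c - m)) = 0 := by
    linear_combination (-(c - m)) * f3 + h5
  have key : c * (1 - m) - t * (c - m) = 0 :=
    (mul_eq_zero.mp key2).resolve_left (sub_ne_zero.mpr hpd)
  -- conclude
  have h1v : X - M = ((1 - t) - m) • (α - A) + t • (β - A) := by
    linear_combination (norm := module) ht - hm
  have h2v : S - M = c • (β - A) - m • (α - A) := by
    linear_combination (norm := module) hc - hm
  have hz : X - M = (t / c) • (S - M) := by
    rw [h1v, h2v]
    match_scalars <;> field_simp <;>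
      first
        | rfl
        | linear_combination key
        | linear_combination -key
  have hmem : (t / c) • (S -ᵥ M) +ᵥ M ∈ lineThrough M S := by
    unfold lineThrough
    exact smul_vsub_vadd_mem_affineSpan_pair _ M S
  have hX : X = (t / c) • (S -ᵥ M) +ᵥ M := by
    rw [vsub_eq_sub, ← hz, vadd_eq_add, sub_add_cancel]
  rwa [← hX] at hmem
end
end
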